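/- arXiv:1309.1790 — 6 statements merged into one kernel-verified Lean document; each statement's English description precedes it below -/
import Mathlib

section
/- Suppose m = 2, L_11 < α_1, and (α_1 − L_11)(α_2 − L_22) > L_12 L_21. Then the system ẋ_i(t) = −a_i(t)x_i(t) + Σ_{j=1}^2 F_{ij}(t, x_j(g_{ij}(t))) is globally exponentially stable. -/
/-!
Choose weights `p₁, p₂ > 0` with `L₁₁ p₁ + L₁₂ p₂ < α₁ p₁` and `L₂₁ p₁ + L₂₂ p₂ < α₂ p₂` (this is
where `diag α - L` being a nonsingular M-matrix enters), and a rate `Λ > 0` so small that these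
inequalities survive the factor `exp (Λ σ)` that a delay of at most `σ` costs. Then, for `B` above
the weighted sup norm `max |xᵢ| / pᵢ` of the initial history, the weighted norm stays below the
barrier `B exp (-Λ (t - t₀))`. At a first contact time the touching component is bounded away
from zero, so near that time the integrand `-aᵢ xᵢ + ∑ⱼ Fᵢⱼ(t, xⱼ(gᵢⱼ t))` lies below the
derivative of the barrier; integrating contradicts the contact. Only the integral form of the equation is used.
-/

open MeasureTheory Real Set Filter Topology

theorem integral_neg_mul_exp_decay (B Λ t₀ τ t : ℝ) :
    ∫ s in τ..t, -Λ * B * exp (-Λ * (s - t₀))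
      = B * exp (-Λ * (t - t₀)) - B * exp (-Λ * (τ - t₀)) := by
  refine intervalIntegral.integral_eq_sub_of_hasDerivAt (f := fun s => B * exp (-Λ * (s - t₀)))
    (fun s _ => ?_)
    ((by fun_prop : Continuous fun s => -Λ * B * exp (-Λ * (s - t₀))).intervalIntegrable _ _)
  refine ((((hasDerivAt_id s).sub_const t₀).const_mul (-Λ)).exp.const_mul B).congr_deriv ?_
  simp only [id]
  ring

theorem lt_barrier_of_forall_Ico_lt {f x : ℝ → ℝ} {α B K Λ t₀ t₁ : ℝ} (hx : Continuous x)
    (hα : 0 ≤ α) (hB : 0 < B) (hKB : K + Λ * B < α * B) (ht : t₀ < t₁)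
    (hf : IntervalIntegrable f volume t₀ t₁)
    (hfx : ∀ s ∈ Ioo t₀ t₁, 0 < x s → f s ≤ -α * x s + K * exp (-Λ * (s - t₀)))
    (heq : ∀ τ ∈ Ico t₀ t₁, x t₁ - x τ = ∫ s in τ..t₁, f s)
    (hlt : ∀ s ∈ Ico t₀ t₁, x s < B * exp (-Λ * (s - t₀))) :
    x t₁ < B * exp (-Λ * (t₁ - t₀)) := by
  by_contra! hge
  have he := exp_pos (-Λ * (t₁ - t₀))
  have hnear : ∀ᶠ s in 𝓝 t₁, 0 < x s ∧ (K + Λ * B) * exp (-Λ * (s - t₀)) < α * x s := by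
    refine (continuousAt_const.eventually_lt hx.continuousAt ?_).and
      ((by fun_prop : Continuous fun s => (K + Λ * B) * exp (-Λ * (s - t₀))).continuousAt
        |>.eventually_lt (continuous_const.mul hx).continuousAt ?_)
    · exact (mul_pos hB he).trans_le hge
    · calc _ < α * B * exp (-Λ * (t₁ - t₀)) := by nlinarith
        _ ≤ α * x t₁ := by rw [mul_assoc]; exact mul_le_mul_of_nonneg_left hge hα
  obtain ⟨l, hl, hIcc⟩ := mem_nhdsLE_iff_exists_Icc_subset.1 (nhdsWithin_le_nhds hnear)
  set τ := max t₀ l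
  have hτ : τ ∈ Ico t₀ t₁ := ⟨le_max_left _ _, max_lt ht hl⟩
  have hmono : ∫ s in τ..t₁, f s ≤ ∫ s in τ..t₁, -Λ * B * exp (-Λ * (s - t₀)) := by
    refine intervalIntegral.integral_mono_on_of_le_Ioo hτ.2.le
      (hf.mono_set (uIcc_subset_uIcc_right (by simp [uIcc_of_le ht.le, hτ.1, hτ.2.le])))
      ((by fun_prop : Continuous _).intervalIntegrable _ _) fun s hs => ?_
    obtain ⟨hxs, hlin⟩ := hIcc ⟨(le_max_right _ _).trans hs.1.le, hs.2.le⟩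
    have := hfx s ⟨hτ.1.trans_lt hs.1, hs.2⟩ hxs
    linarith
  rw [integral_neg_mul_exp_decay, ← heq τ hτ] at hmono
  linarith [hlt τ hτ]

theorem abs_lt_barrier_of_forall_Ico_abs_lt {a h x : ℝ → ℝ} {α B K Λ t₀ t₁ : ℝ}
    (hx : Continuous x) (hα : 0 ≤ α) (hB : 0 < B) (hKB : K + Λ * B < α * B) (ht : t₀ < t₁)
    (ha : ∀ s ∈ Ioo t₀ t₁, α ≤ a s) (hh : ∀ s ∈ Ioo t₀ t₁, |h s| ≤ K * exp (-Λ * (s - t₀)))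
    (hint : IntervalIntegrable (fun s => -a s * x s + h s) volume t₀ t₁)
    (heq : ∀ τ ∈ Ico t₀ t₁, x t₁ - x τ = ∫ s in τ..t₁, (-a s * x s + h s))
    (hlt : ∀ s ∈ Ico t₀ t₁, |x s| < B * exp (-Λ * (s - t₀))) :
    |x t₁| < B * exp (-Λ * (t₁ - t₀)) := by
  have hdiss : ∀ s ∈ Ioo t₀ t₁, ∀ y : ℝ, 0 < y → -a s * y ≤ -α * y := fun s hs y hy => by
    nlinarith [ha s hs]
  refine abs_lt.2 ⟨neg_lt.1 ?_, ?_⟩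
  · refine lt_barrier_of_forall_Ico_lt (f := fun s => -(-a s * x s + h s)) hx.neg hα hB hKB ht
      hint.neg (fun s hs hxs => ?_) (fun τ hτ => ?_) (fun s hs => neg_lt.1 (abs_lt.1 (hlt s hs)).1)
    · have := hdiss s hs _ hxs
      have := neg_le_of_abs_le (hh s hs)
      simp only [Pi.neg_apply] at *
      linarith
    · rw [intervalIntegral.integral_neg, ← heq τ hτ]
      simp only [Pi.neg_apply]; ring
  · refine lt_barrier_of_forall_Ico_lt hx hα hB hKB ht hint (fun s hs hxs => ?_) heq
      (fun s hs => (abs_lt.1 (hlt s hs)).2)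
    linarith [hdiss s hs _ hxs, le_of_abs_le (hh s hs)]

theorem forall_lt_of_forall_Ico_lt {f g : ℝ → ℝ} {t₀ : ℝ} (hf : Continuous f)
    (hg : Continuous g) (h₀ : f t₀ < g t₀)
    (hstep : ∀ t₁, t₀ < t₁ → (∀ s ∈ Ico t₀ t₁, f s < g s) → f t₁ < g t₁) :
    ∀ t, t₀ ≤ t → f t < g t := by
  by_contra! ⟨t, ht, hgf⟩
  set S := Ici t₀ ∩ {s | g s ≤ f s}
  have hbdd : BddBelow S := ⟨t₀, fun s hs => hs.1⟩
  have hmem : sInf S ∈ S :=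
    (isClosed_Ici.inter (isClosed_le hg hf)).csInf_mem ⟨t, ht, hgf⟩ hbdd
  have hlt : t₀ < sInf S := lt_of_le_of_ne hmem.1 fun h => (h ▸ hmem.2).not_gt h₀
  refine (hstep _ hlt fun s hs => ?_).not_ge hmem.2
  by_contra! hs'
  exact (csInf_le hbdd ⟨hs.1, hs'⟩).not_gt hs.2

theorem exists_pos_forall_mul_exp_add_lt {ι : Type*} [Finite ι] {c d q : ι → ℝ} (σ : ℝ)
    (h : ∀ i, c i < d i) : ∃ Λ > 0, ∀ i, c i * exp (Λ * σ) + Λ * q i < d i := by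
  have hnear : ∀ᶠ Λ in 𝓝 (0 : ℝ), ∀ i, c i * exp (Λ * σ) + Λ * q i < d i := by
    refine eventually_all.2 fun i => ?_
    refine (by fun_prop : Continuous fun Λ => c i * exp (Λ * σ) + Λ * q i).continuousAt
      |>.eventually_lt continuousAt_const ?_
    simpa using h i
  exact ((hnear.filter_mono (nhdsWithin_le_nhds (s := Ioi 0))).and
    self_mem_nhdsWithin).exists.imp fun Λ h => ⟨h.2, h.1⟩

theorem exists_pos_mul_lt_of_det_pos {α₁ α₂ L₁₁ L₁₂ L₂₁ L₂₂ : ℝ} (hL₁₂ : 0 ≤ L₁₂)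
    (hL₂₁ : 0 ≤ L₂₁) (h₁ : L₁₁ < α₁) (hdet : L₁₂ * L₂₁ < (α₁ - L₁₁) * (α₂ - L₂₂)) :
    ∃ p₁ p₂ : ℝ, 0 < p₁ ∧ 0 < p₂ ∧
      L₁₁ * p₁ + L₁₂ * p₂ < α₁ * p₁ ∧ L₂₁ * p₁ + L₂₂ * p₂ < α₂ * p₂ := by
  have h₂ : 0 < α₂ - L₂₂ :=
    pos_of_mul_pos_right ((mul_nonneg hL₁₂ hL₂₁).trans_lt hdet) (by linarith)
  exact ⟨L₁₂ + (α₂ - L₂₂), (α₁ - L₁₁) + L₂₁, by linarith, by linarith, by nlinarith, by nlinarith⟩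

section DelaySystem

variable {ι : Type*} [Fintype ι]

theorem abs_le_mul_norm_inv_mul {p x : ι → ℝ} {j : ι} (hp : 0 < p j) :
    |x j| ≤ p j * ‖p⁻¹ * x‖ := by
  have := norm_le_pi_norm (p⁻¹ * x) j
  rw [Pi.mul_apply, Pi.inv_apply, norm_mul, norm_inv, Real.norm_of_nonneg hp.le,
    Real.norm_eq_abs, inv_mul_le_iff₀ hp] at this
  exact this

theorem norm_inv_mul_lt_iff {p x : ι → ℝ} {r : ℝ} (hp : ∀ i, 0 < p i) (hr : 0 < r) :
    ‖p⁻¹ * x‖ < r ↔ ∀ i, |x i| < p i * r := by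
  refine (pi_norm_lt_iff hr).trans (forall_congr' fun i => ?_)
  rw [Pi.mul_apply, Pi.inv_apply, norm_mul, norm_inv, Real.norm_of_nonneg (hp i).le,
    Real.norm_eq_abs, inv_mul_lt_iff₀ (hp i)]

/-- `X` on `(-∞, t₀]` plays the role of the initial function `φ`. -/
structure IsDelaySolution (a : ι → ℝ → ℝ) (F : ι → ι → ℝ → ℝ → ℝ) (g : ι → ι → ℝ → ℝ)
    (t₀ : ℝ) (X : ℝ → ι → ℝ) : Prop where
  continuous : Continuous X
  intervalIntegrable : ∀ i t, t₀ ≤ t →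
    IntervalIntegrable (fun s => -a i s * X s i + ∑ j, F i j s (X (g i j s) j)) volume t₀ t
  eq_add_integral : ∀ i t, t₀ ≤ t →
    X t i = X t₀ i + ∫ s in t₀..t, (-a i s * X s i + ∑ j, F i j s (X (g i j s) j))

variable {a : ι → ℝ → ℝ} {F : ι → ι → ℝ → ℝ → ℝ} {g : ι → ι → ℝ → ℝ}

namespace IsDelaySolution

variable {t₀ : ℝ} {X : ℝ → ι → ℝ}

theorem sub_eq_integral (hX : IsDelaySolution a F g t₀ X) (i : ι) {τ t : ℝ} (hτ : t₀ ≤ τ)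
    (ht : τ ≤ t) :
    X t i - X τ i = ∫ s in τ..t, (-a i s * X s i + ∑ j, F i j s (X (g i j s) j)) := by
  rw [hX.eq_add_integral i t (hτ.trans ht), hX.eq_add_integral i τ hτ, ←
    intervalIntegral.integral_interval_sub_left (hX.intervalIntegrable i t (hτ.trans ht))
      (hX.intervalIntegrable i τ hτ)]
  ring

theorem norm_inv_mul_lt {α : ι → ℝ} {L : ι → ι → ℝ} {σ Λ B : ℝ} {p : ι → ℝ}
    (hX : IsDelaySolution a F g t₀ X) (ht₀ : 0 ≤ t₀) (hα : ∀ i t, 0 ≤ t → α i ≤ a i t)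
    (hL : ∀ i j t u, 0 ≤ t → |F i j t u| ≤ L i j * |u|)
    (hg : ∀ i j t, 0 ≤ t → 0 ≤ t - g i j t ∧ t - g i j t ≤ σ) (hσ : 0 ≤ σ)
    (hp : ∀ i, 0 < p i) (hΛ : 0 ≤ Λ)
    (hrate : ∀ i, (∑ j, L i j * p j) * exp (Λ * σ) + Λ * p i < α i * p i)
    (hB : ∀ s ∈ Icc (t₀ - σ) t₀, ‖p⁻¹ * X s‖ < B) :
    ∀ t, t₀ ≤ t → ‖p⁻¹ * X t‖ < B * exp (-Λ * (t - t₀)) := by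
  have hL0 : ∀ i j, 0 ≤ L i j := fun i j =>
    (abs_nonneg _).trans (by simpa using hL i j 0 1 le_rfl)
  have hrow0 : ∀ i, 0 ≤ ∑ j, L i j * p j := fun i =>
    Finset.sum_nonneg fun j _ => mul_nonneg (hL0 i j) (hp j).le
  have hB0 : 0 < B := (norm_nonneg _).trans_lt (hB t₀ ⟨by linarith, le_rfl⟩)
  have hXc := hX.continuous
  refine forall_lt_of_forall_Ico_lt (by fun_prop) (by fun_prop)
    (by simpa using hB t₀ ⟨by linarith, le_rfl⟩) fun t₁ ht₁ hbelow => ?_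
  have hpast : ∀ τ, t₀ - σ ≤ τ → τ < t₁ → ‖p⁻¹ * X τ‖ ≤ B * exp (-Λ * (τ - t₀)) := by
    intro τ hστ hτ
    rcases le_or_gt τ t₀ with hτ₀ | hτ₀
    · exact (hB τ ⟨hστ, hτ₀⟩).le.trans
        (le_mul_of_one_le_right hB0.le (one_le_exp (by nlinarith)))
    · exact (hbelow τ ⟨hτ₀.le, hτ⟩).le
  have hdelay : ∀ i j, ∀ s ∈ Ioo t₀ t₁, |F i j s (X (g i j s) j)|
      ≤ L i j * p j * exp (Λ * σ) * B * exp (-Λ * (s - t₀)) := by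
    intro i j s hs
    obtain ⟨hgs, hsσ⟩ := hg i j s (ht₀.trans hs.1.le)
    have hexp : exp (-Λ * (g i j s - t₀)) ≤ exp (Λ * σ) * exp (-Λ * (s - t₀)) := by
      rw [← exp_add]
      exact exp_le_exp.2 (by nlinarith)
    have hXg : |X (g i j s) j| ≤ p j * (B * (exp (Λ * σ) * exp (-Λ * (s - t₀)))) :=
      (abs_le_mul_norm_inv_mul (hp j)).trans <| mul_le_mul_of_nonneg_left
        ((hpast _ (by linarith [hs.1]) (by linarith [hs.2])).trans
          (mul_le_mul_of_nonneg_left hexp hB0.le)) (hp j).le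
    calc |F i j s (X (g i j s) j)| ≤ L i j * |X (g i j s) j| := hL i j s _ (ht₀.trans hs.1.le)
      _ ≤ L i j * (p j * (B * (exp (Λ * σ) * exp (-Λ * (s - t₀))))) :=
        mul_le_mul_of_nonneg_left hXg (hL0 i j)
      _ = L i j * p j * exp (Λ * σ) * B * exp (-Λ * (s - t₀)) := by ring
  rw [norm_inv_mul_lt_iff hp (by positivity)]
  intro i
  rw [← mul_assoc]
  have hαi : 0 < α i := by nlinarith [hrate i, hrow0 i, hp i, exp_pos (Λ * σ)]
  refine abs_lt_barrier_of_forall_Ico_abs_lt (K := (∑ j, L i j * p j) * exp (Λ * σ) * B)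
    (by fun_prop) hαi.le (mul_pos (hp i) hB0) (by nlinarith [hrate i]) ht₁
    (fun s hs => hα i s (ht₀.trans hs.1.le)) (fun s hs => ?_) (hX.intervalIntegrable i t₁ ht₁.le)
    (fun τ hτ => hX.sub_eq_integral i hτ.1 hτ.2.le)
    (fun s hs => mul_assoc (p i) B _ ▸ (norm_inv_mul_lt_iff hp (by positivity)).1 (hbelow s hs) i)
  calc |∑ j, F i j s (X (g i j s) j)| ≤ ∑ j, |F i j s (X (g i j s) j)| :=
        Finset.abs_sum_le_sum_abs _ _
    _ ≤ ∑ j, L i j * p j * exp (Λ * σ) * B * exp (-Λ * (s - t₀)) :=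
        Finset.sum_le_sum fun j _ => hdelay i j s hs
    _ = (∑ j, L i j * p j) * exp (Λ * σ) * B * exp (-Λ * (s - t₀)) := by
        simp only [Finset.sum_mul]

end IsDelaySolution

theorem exists_norm_le_mul_exp_mul_sSup_of_sum_mul_lt [Nonempty ι] {α : ι → ℝ}
    {L : ι → ι → ℝ} {σ : ℝ} {p : ι → ℝ} (hα : ∀ i t, 0 ≤ t → α i ≤ a i t)
    (hL : ∀ i j t u, 0 ≤ t → |F i j t u| ≤ L i j * |u|)
    (hg : ∀ i j t, 0 ≤ t → 0 ≤ t - g i j t ∧ t - g i j t ≤ σ)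
    (hp : ∀ i, 0 < p i) (hrow : ∀ i, ∑ j, L i j * p j < α i * p i) :
    ∃ M Λ : ℝ, 0 < M ∧ 0 < Λ ∧ ∀ t₀, 0 ≤ t₀ → ∀ X, IsDelaySolution a F g t₀ X →
      ∀ t, t₀ ≤ t → ‖X t‖ ≤ M * exp (-Λ * (t - t₀)) * sSup ((‖X ·‖) '' Icc (t₀ - σ) t₀) := by
  obtain ⟨Λ, hΛ, hrate⟩ := exists_pos_forall_mul_exp_add_lt (q := p) σ hrow
  have hσ : 0 ≤ σ := by
    obtain ⟨hg₀, hgσ⟩ := hg (Classical.arbitrary ι) (Classical.arbitrary ι) 0 le_rfl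
    exact hg₀.trans hgσ
  have hnorm_pos : ∀ q : ι → ℝ, (∀ i, 0 < q i) → 0 < ‖q‖ := fun q hq =>
    (hq (Classical.arbitrary ι)).trans_le ((le_abs_self _).trans (norm_le_pi_norm q _))
  have hpp : p * p⁻¹ = 1 := funext fun i => mul_inv_cancel₀ (hp i).ne'
  refine ⟨‖p‖ * ‖p⁻¹‖, Λ, mul_pos (hnorm_pos p hp) (hnorm_pos _ fun i => inv_pos.2 (hp i)), hΛ,
    fun t₀ ht₀ X hX t ht => ?_⟩
  set S := sSup ((‖X ·‖) '' Icc (t₀ - σ) t₀)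
  have hS : ∀ s ∈ Icc (t₀ - σ) t₀, ‖p⁻¹ * X s‖ ≤ ‖p⁻¹‖ * S := fun s hs =>
    (norm_mul_le _ _).trans <| mul_le_mul_of_nonneg_left
      (le_csSup (isCompact_Icc.image hX.continuous.norm).bddAbove ⟨s, hs, rfl⟩) (norm_nonneg _)
  have hweighted : ‖p⁻¹ * X t‖ ≤ ‖p⁻¹‖ * S * exp (-Λ * (t - t₀)) := by
    refine le_of_forall_gt fun c hc => ?_
    have he := exp_pos (-Λ * (t - t₀))
    have := hX.norm_inv_mul_lt ht₀ hα hL hg hσ hp hΛ.le hrate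
      (fun s hs => (hS s hs).trans_lt ((lt_div_iff₀ he).2 hc)) t ht
    rwa [div_mul_cancel₀ _ he.ne'] at this
  calc ‖X t‖ = ‖p * (p⁻¹ * X t)‖ := by rw [← mul_assoc, hpp, one_mul]
    _ ≤ ‖p‖ * ‖p⁻¹ * X t‖ := norm_mul_le _ _
    _ ≤ ‖p‖ * (‖p⁻¹‖ * S * exp (-Λ * (t - t₀))) :=
      mul_le_mul_of_nonneg_left hweighted (norm_nonneg _)
    _ = ‖p‖ * ‖p⁻¹‖ * exp (-Λ * (t - t₀)) * S := by ring

end DelaySystem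

theorem stmt6_general
    (a₁ a₂ : ℝ → ℝ) (α₁ α₂ A₁ A₂ : ℝ)
    (F₁₁ F₁₂ F₂₁ F₂₂ : ℝ → ℝ → ℝ) (L₁₁ L₁₂ L₂₁ L₂₂ : ℝ)
    (g₁₁ g₁₂ g₂₁ g₂₂ : ℝ → ℝ) (σ : ℝ)
    -- (a1)
    (ha₁_bd : ∀ t, 0 ≤ t → α₁ ≤ a₁ t ∧ a₁ t ≤ A₁)
    (ha₂_bd : ∀ t, 0 ≤ t → α₂ ≤ a₂ t ∧ a₂ t ≤ A₂)
    -- (a2)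
    (hL₁₁ : ∀ t u, 0 ≤ t → |F₁₁ t u| ≤ L₁₁ * |u|)
    (hL₁₂ : ∀ t u, 0 ≤ t → |F₁₂ t u| ≤ L₁₂ * |u|)
    (hL₂₁ : ∀ t u, 0 ≤ t → |F₂₁ t u| ≤ L₂₁ * |u|)
    (hL₂₂ : ∀ t u, 0 ≤ t → |F₂₂ t u| ≤ L₂₂ * |u|)
    -- (a3)
    (hg₁₁ : ∀ t, 0 ≤ t → 0 ≤ t - g₁₁ t ∧ t - g₁₁ t ≤ σ)
    (hg₁₂ : ∀ t, 0 ≤ t → 0 ≤ t - g₁₂ t ∧ t - g₁₂ t ≤ σ)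
    (hg₂₁ : ∀ t, 0 ≤ t → 0 ≤ t - g₂₁ t ∧ t - g₂₁ t ≤ σ)
    (hg₂₂ : ∀ t, 0 ≤ t → 0 ≤ t - g₂₂ t ∧ t - g₂₂ t ≤ σ)
    -- stability conditions
    (hcond₁ : L₁₁ < α₁)
    (hcond₂ : (α₁ - L₁₁) * (α₂ - L₂₂) > L₁₂ * L₂₁) :
    -- global exponential stability
    ∃ M Λ : ℝ, 0 < M ∧ 0 < Λ ∧
      ∀ t₀ : ℝ, 0 ≤ t₀ → ∀ x₁ x₂ : ℝ → ℝ,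
        Continuous x₁ → Continuous x₂ →
        (∀ t, t₀ ≤ t → IntervalIntegrable
            (fun s => -(a₁ s) * x₁ s + (F₁₁ s (x₁ (g₁₁ s)) + F₁₂ s (x₂ (g₁₂ s))))
            volume t₀ t) →
        (∀ t, t₀ ≤ t → IntervalIntegrable
            (fun s => -(a₂ s) * x₂ s + (F₂₁ s (x₁ (g₂₁ s)) + F₂₂ s (x₂ (g₂₂ s))))
            volume t₀ t) →
        (∀ t, t₀ ≤ t →
          x₁ t = x₁ t₀ + ∫ s in t₀..t,
            (-(a₁ s) * x₁ s + (F₁₁ s (x₁ (g₁₁ s)) + F₁₂ s (x₂ (g₁₂ s))))) →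
        (∀ t, t₀ ≤ t →
          x₂ t = x₂ t₀ + ∫ s in t₀..t,
            (-(a₂ s) * x₂ s + (F₂₁ s (x₁ (g₂₁ s)) + F₂₂ s (x₂ (g₂₂ s))))) →
        ∀ t, t₀ ≤ t →
          ‖(x₁ t, x₂ t)‖ ≤
            M * Real.exp (-Λ * (t - t₀)) *
              (‖(x₁ t₀, x₂ t₀)‖ +
                sSup ((fun s => ‖(x₁ s, x₂ s)‖) '' Set.Icc (t₀ - σ) t₀)) := by
  have hL_nonneg : ∀ {F : ℝ → ℝ → ℝ} {L : ℝ}, (∀ t u, 0 ≤ t → |F t u| ≤ L * |u|) → 0 ≤ L :=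
    fun hF => (abs_nonneg _).trans (by simpa using hF 0 1 le_rfl)
  obtain ⟨p₁, p₂, hp₁, hp₂, hrow₁, hrow₂⟩ :=
    exists_pos_mul_lt_of_det_pos (hL_nonneg hL₁₂) (hL_nonneg hL₂₁) hcond₁ hcond₂
  obtain ⟨M, Λ, hM, hΛ, hstable⟩ := exists_norm_le_mul_exp_mul_sSup_of_sum_mul_lt
    (a := ![a₁, a₂]) (α := ![α₁, α₂]) (F := ![![F₁₁, F₁₂], ![F₂₁, F₂₂]])
    (L := ![![L₁₁, L₁₂], ![L₂₁, L₂₂]]) (g := ![![g₁₁, g₁₂], ![g₂₁, g₂₂]]) (p := ![p₁, p₂])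
    (Fin.forall_fin_two.2 ⟨fun t ht => (ha₁_bd t ht).1, fun t ht => (ha₂_bd t ht).1⟩)
    (Fin.forall_fin_two.2 ⟨Fin.forall_fin_two.2 ⟨hL₁₁, hL₁₂⟩, Fin.forall_fin_two.2 ⟨hL₂₁, hL₂₂⟩⟩)
    (Fin.forall_fin_two.2 ⟨Fin.forall_fin_two.2 ⟨hg₁₁, hg₁₂⟩, Fin.forall_fin_two.2 ⟨hg₂₁, hg₂₂⟩⟩)
    (Fin.forall_fin_two.2 ⟨hp₁, hp₂⟩)
    (by simp [Fin.forall_fin_two, Fin.sum_univ_two, hrow₁, hrow₂])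
  refine ⟨M, Λ, hM, hΛ, fun t₀ ht₀ x₁ x₂ hx₁ hx₂ hI₁ hI₂ heq₁ heq₂ t ht => ?_⟩
  have hX : IsDelaySolution ![a₁, a₂] ![![F₁₁, F₁₂], ![F₂₁, F₂₂]] ![![g₁₁, g₁₂], ![g₂₁, g₂₂]]
      t₀ fun s => ![x₁ s, x₂ s] :=
    ⟨by fun_prop, by simpa only [Fin.forall_fin_two, Fin.sum_univ_two] using ⟨hI₁, hI₂⟩,
      by simpa only [Fin.forall_fin_two, Fin.sum_univ_two] using ⟨heq₁, heq₂⟩⟩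
  have hnorm : ∀ s, ‖(x₁ s, x₂ s)‖ = ‖![x₁ s, x₂ s]‖ := fun s => by
    simp [Prod.norm_def, Pi.norm_def, Fin.univ_succ]
  simp only [hnorm]
  calc _ ≤ M * exp (-Λ * (t - t₀)) * sSup ((fun s => ‖![x₁ s, x₂ s]‖) '' Icc (t₀ - σ) t₀) :=
        hstable t₀ ht₀ _ hX t ht
    _ ≤ _ := by gcongr; exact le_add_of_nonneg_left (norm_nonneg _)

/-- Corollary 2.7: for `m = 2`, if `L₁₁ < α₁` and `(α₁ − L₁₁)(α₂ − L₂₂) > L₁₂L₂₁`,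
then the system `ẋ_i(t) = −a_i(t)x_i(t) + Σ_j F_{ij}(t, x_j(g_{ij}(t)))` (i = 1,2)
is globally exponentially stable. -/
theorem stmt6
    (a₁ a₂ : ℝ → ℝ) (α₁ α₂ A₁ A₂ : ℝ)
    (F₁₁ F₁₂ F₂₁ F₂₂ : ℝ → ℝ → ℝ) (L₁₁ L₁₂ L₂₁ L₂₂ : ℝ)
    (g₁₁ g₁₂ g₂₁ g₂₂ : ℝ → ℝ) (σ : ℝ)
    -- (a1)
    (ha₁_meas : Measurable a₁) (ha₂_meas : Measurable a₂)
    (hα₁ : 0 < α₁) (hα₂ : 0 < α₂)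
    (ha₁_bd : ∀ t, 0 ≤ t → α₁ ≤ a₁ t ∧ a₁ t ≤ A₁)
    (ha₂_bd : ∀ t, 0 ≤ t → α₂ ≤ a₂ t ∧ a₂ t ≤ A₂)
    -- (a2)
    (hF₁₁ : ∀ t, Continuous (F₁₁ t)) (hF₁₂ : ∀ t, Continuous (F₁₂ t))
    (hF₂₁ : ∀ t, Continuous (F₂₁ t)) (hF₂₂ : ∀ t, Continuous (F₂₂ t))
    (hF₁₁m : ∀ u, Measurable fun t => F₁₁ t u) (hF₁₂m : ∀ u, Measurable fun t => F₁₂ t u)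
    (hF₂₁m : ∀ u, Measurable fun t => F₂₁ t u) (hF₂₂m : ∀ u, Measurable fun t => F₂₂ t u)
    (hL₁₁ : ∀ t u, 0 ≤ t → |F₁₁ t u| ≤ L₁₁ * |u|)
    (hL₁₂ : ∀ t u, 0 ≤ t → |F₁₂ t u| ≤ L₁₂ * |u|)
    (hL₂₁ : ∀ t u, 0 ≤ t → |F₂₁ t u| ≤ L₂₁ * |u|)
    (hL₂₂ : ∀ t u, 0 ≤ t → |F₂₂ t u| ≤ L₂₂ * |u|)
    -- (a3)
    (hg₁₁_meas : Measurable g₁₁) (hg₁₂_meas : Measurable g₁₂)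
    (hg₂₁_meas : Measurable g₂₁) (hg₂₂_meas : Measurable g₂₂)
    (hg₁₁ : ∀ t, 0 ≤ t → 0 ≤ t - g₁₁ t ∧ t - g₁₁ t ≤ σ)
    (hg₁₂ : ∀ t, 0 ≤ t → 0 ≤ t - g₁₂ t ∧ t - g₁₂ t ≤ σ)
    (hg₂₁ : ∀ t, 0 ≤ t → 0 ≤ t - g₂₁ t ∧ t - g₂₁ t ≤ σ)
    (hg₂₂ : ∀ t, 0 ≤ t → 0 ≤ t - g₂₂ t ∧ t - g₂₂ t ≤ σ)
    -- stability conditions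
    (hcond₁ : L₁₁ < α₁)
    (hcond₂ : (α₁ - L₁₁) * (α₂ - L₂₂) > L₁₂ * L₂₁) :
    -- global exponential stability
    ∃ M Λ : ℝ, 0 < M ∧ 0 < Λ ∧
      ∀ t₀ : ℝ, 0 ≤ t₀ → ∀ x₁ x₂ : ℝ → ℝ,
        Continuous x₁ → Continuous x₂ →
        (∀ t, t₀ ≤ t → IntervalIntegrable
            (fun s => -(a₁ s) * x₁ s + (F₁₁ s (x₁ (g₁₁ s)) + F₁₂ s (x₂ (g₁₂ s))))
            volume t₀ t) →
        (∀ t, t₀ ≤ t → IntervalIntegrable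
            (fun s => -(a₂ s) * x₂ s + (F₂₁ s (x₁ (g₂₁ s)) + F₂₂ s (x₂ (g₂₂ s))))
            volume t₀ t) →
        (∀ t, t₀ ≤ t →
          x₁ t = x₁ t₀ + ∫ s in t₀..t,
            (-(a₁ s) * x₁ s + (F₁₁ s (x₁ (g₁₁ s)) + F₁₂ s (x₂ (g₁₂ s))))) →
        (∀ t, t₀ ≤ t →
          x₂ t = x₂ t₀ + ∫ s in t₀..t,
            (-(a₂ s) * x₂ s + (F₂₁ s (x₁ (g₂₁ s)) + F₂₂ s (x₂ (g₂₂ s))))) →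
        ∀ t, t₀ ≤ t →
          ‖(x₁ t, x₂ t)‖ ≤
            M * Real.exp (-Λ * (t - t₀)) *
              (‖(x₁ t₀, x₂ t₀)‖ +
                sSup ((fun s => ‖(x₁ s, x₂ s)‖) '' Set.Icc (t₀ - σ) t₀)) :=
  stmt6_general a₁ a₂ α₁ α₂ A₁ A₂ F₁₁ F₁₂ F₂₁ F₂₂ L₁₁ L₁₂ L₂₁ L₂₂ g₁₁ g₁₂ g₂₁ g₂₂ σ ha₁_bd ha₂_bd
    hL₁₁ hL₁₂ hL₂₁ hL₂₂ hg₁₁ hg₁₂ hg₂₁ hg₂₂ hcond₁ hcond₂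
end

section
/- Suppose m = 2, σ_11 < α_1/A_1², and (α_1 − A_1²σ_11)(α_2 − A_2²σ_22) > A_12 A_21 (1 + A_1σ_11)(1 + A_2σ_22). Then the linear delay system ẋ_i(t) = Σ_{j=1}^2 a_{ij}(t)x_j(g_{ij}(t)) is exponentially stable. -/
/-!
Choose weights `d₁, d₂ > 0` with `dᵢ (αᵢ - Aᵢ² σᵢᵢ) > dⱼ Aᵢⱼ (1 + Aᵢ σᵢᵢ)`; the second
hypothesis is exactly what makes such weights exist. Compare `|xᵢ|` with `dᵢ B`, where the barrier
`B` is constant before `t₀`, doubles on every interval of length `ε` up to `t₀ + σ + 1` (`σ` the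
largest delay), and then decays like `e^{-εt}`. Consider a first time `τ` at which
`|xᵢ(τ)| = dᵢ B(τ)`.
In the growth phase this is impossible because `ẋᵢ = O(B(τ))` while `B` doubled within time `ε`.
In the decay phase write `ẋᵢ = aᵢᵢ xᵢ(τ) + aᵢᵢ (xᵢ(gᵢᵢ) - xᵢ(τ)) + aᵢⱼ xⱼ(gᵢⱼ)`: the first term is
at most `-αᵢ dᵢ B(τ)`, the second at most `Aᵢ σᵢᵢ (Aᵢ dᵢ + Aᵢⱼ dⱼ) B(τ)` and the third at most
`Aᵢⱼ dⱼ B(τ)` (up to factors `1 + O(ε)`), so by the choice of weights `xᵢ` decreases on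
`[τ - ε, τ]` faster than `B` allows.
-/

open MeasureTheory Set Filter Topology Real

noncomputable def barrier (b μ κ t₀ t₁ t : ℝ) : ℝ :=
  b * exp (μ * (min (max t t₀) t₁ - t₀) - κ * (max t t₁ - t₁))

section Barrier

variable {b μ κ t₀ t₁ : ℝ}

lemma barrier_pos (hb : 0 < b) (t : ℝ) : 0 < barrier b μ κ t₀ t₁ t := by
  unfold barrier; positivity

lemma continuous_barrier : Continuous (barrier b μ κ t₀ t₁) := by
  unfold barrier; fun_prop

lemma barrier_of_le {t : ℝ} (ht : t ≤ t₀) (h₀₁ : t₀ ≤ t₁) : barrier b μ κ t₀ t₁ t = b := by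
  simp [barrier, max_eq_right ht, min_eq_left h₀₁, max_eq_right (ht.trans h₀₁)]

lemma barrier_le_barrier {u v : ℝ} (hb : 0 ≤ b) (hμ : 0 ≤ μ) (huv : u ≤ v) (hv : v ≤ t₁) :
    barrier b μ κ t₀ t₁ u ≤ barrier b μ κ t₀ t₁ v := by
  unfold barrier
  rw [max_eq_right (huv.trans hv), max_eq_right hv]
  gcongr

lemma barrier_le_mul_exp {u v : ℝ} (hb : 0 ≤ b) (hμ : 0 ≤ μ) (hκ : 0 ≤ κ) (hvu : v ≤ u) :
    barrier b μ κ t₀ t₁ v ≤ barrier b μ κ t₀ t₁ u * exp (κ * (u - v)) := by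
  unfold barrier
  rw [mul_assoc, ← exp_add]
  gcongr ?_ * exp ?_
  have hclamp : min (max v t₀) t₁ ≤ min (max u t₀) t₁ := by gcongr
  have hmax : max u t₁ ≤ max v t₁ + (u - v) := max_le (by grind) (by grind)
  nlinarith [mul_le_mul_of_nonneg_left hclamp hμ, mul_le_mul_of_nonneg_left hmax hκ]

lemma barrier_eq_mul_exp {s t : ℝ} (hs : t₀ ≤ s) (hst : s ≤ t) (ht : t ≤ t₁) :
    barrier b μ κ t₀ t₁ s = barrier b μ κ t₀ t₁ t * exp (-(μ * (t - s))) := by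
  unfold barrier
  rw [mul_assoc, ← exp_add, max_eq_left hs, max_eq_left (hs.trans hst), min_eq_left (hst.trans ht),
    min_eq_left ht, max_eq_right (hst.trans ht), max_eq_right ht]
  ring_nf

lemma barrier_le_mul_exp_neg (hb : 0 ≤ b) (hμ : 0 ≤ μ) (hκ : 0 ≤ κ) (t : ℝ) :
    barrier b μ κ t₀ t₁ t ≤ b * exp ((μ + κ) * (t₁ - t₀)) * exp (-κ * (t - t₀)) := by
  unfold barrier
  rw [mul_assoc, ← exp_add]
  gcongr ?_ * exp ?_
  nlinarith [mul_le_mul_of_nonneg_left (min_le_right (max t t₀) t₁) hμ,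
    mul_le_mul_of_nonneg_left (le_max_left t t₁) hκ]

end Barrier

lemma forall_lt_zero_of_no_first_zero {F : ℝ → ℝ} (hF : Continuous F) {t₀ : ℝ} (h₀ : F t₀ < 0)
    (hcross : ∀ τ, t₀ < τ → (∀ s ∈ Icc t₀ τ, F s ≤ 0) → F τ ≠ 0) :
    ∀ t, t₀ ≤ t → F t < 0 := by
  intro T hT
  by_contra! hFT
  set Z := Icc t₀ T ∩ {s | 0 ≤ F s}
  have hbdd : BddBelow Z := bddBelow_Icc.mono inter_subset_left
  have hτZ : sInf Z ∈ Z :=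
    (isClosed_Icc.inter (isClosed_le continuous_const hF)).csInf_mem ⟨T, ⟨hT, le_rfl⟩, hFT⟩ hbdd
  set τ := sInf Z
  obtain ⟨⟨hτ₀, hτT⟩, hFτ⟩ := hτZ
  have hbefore : ∀ s ∈ Ico t₀ τ, F s < 0 := fun s hs => by
    by_contra! h
    exact (csInf_le hbdd ⟨⟨hs.1, hs.2.le.trans hτT⟩, h⟩).not_gt hs.2
  have hτ : t₀ < τ := hτ₀.lt_of_ne fun h => by rw [← h] at hFτ; exact hFτ.not_gt h₀
  have hzero : F τ = 0 := by
    refine le_antisymm (not_lt.mp fun hpos => ?_) hFτ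
    obtain ⟨c, hc, hFc⟩ := intermediate_value_Icc hτ.le hF.continuousOn ⟨h₀.le, hpos.le⟩
    exact (hbefore c ⟨hc.1, hc.2.lt_of_ne (by rintro rfl; exact hpos.ne' hFc)⟩).ne hFc
  refine hcross τ hτ (fun s hs => ?_) hzero
  rcases hs.2.lt_or_eq with h | rfl
  exacts [(hbefore s ⟨hs.1, h⟩).le, hzero.le]

/-- The right-hand side is a separate function `f` so that the second equation of the system,
whose terms come in the other order, and the negated equation have the same shape. -/
structure IsDelaySolution_s7 (x y f a b g h : ℝ → ℝ) (t₀ : ℝ) : Prop where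
  intervalIntegrable : ∀ t, t₀ ≤ t → IntervalIntegrable f volume t₀ t
  eq_add_integral : ∀ t, t₀ ≤ t → x t = x t₀ + ∫ s in t₀..t, f s
  rhs_eq : ∀ u, t₀ ≤ u → f u = a u * x (g u) + b u * y (h u)

structure DelayCoeffBounds (a b g h : ℝ → ℝ) (α A K σ σ' : ℝ) : Prop where
  alpha_nonneg : 0 ≤ α
  diag : ∀ t, 0 ≤ t → α ≤ -a t ∧ -a t ≤ A
  offDiag : ∀ t, 0 ≤ t → |b t| ≤ K
  delay : ∀ t, 0 ≤ t → 0 ≤ t - g t ∧ t - g t ≤ σ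
  delay_le : σ ≤ σ'
  offDelay : ∀ t, 0 ≤ t → 0 ≤ t - h t ∧ t - h t ≤ σ'

namespace DelayCoeffBounds

variable {a b g h : ℝ → ℝ} {α A K σ σ' : ℝ}

lemma abs_diag_le (hc : DelayCoeffBounds a b g h α A K σ σ') {t : ℝ} (ht : 0 ≤ t) :
    |a t| ≤ A := by
  have := hc.diag t ht
  rw [abs_of_nonpos (by linarith [hc.alpha_nonneg])]
  exact this.2

lemma diag_nonneg (hc : DelayCoeffBounds a b g h α A K σ σ') : 0 ≤ A :=
  (abs_nonneg _).trans (hc.abs_diag_le le_rfl)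

lemma offDiag_nonneg (hc : DelayCoeffBounds a b g h α A K σ σ') : 0 ≤ K :=
  (abs_nonneg _).trans (hc.offDiag 0 le_rfl)

lemma delay_nonneg (hc : DelayCoeffBounds a b g h α A K σ σ') : 0 ≤ σ :=
  (hc.delay 0 le_rfl).1.trans (hc.delay 0 le_rfl).2

end DelayCoeffBounds

namespace IsDelaySolution_s7

variable {x y f a b g h B : ℝ → ℝ} {t₀ τ α A K σ σ' d d' : ℝ}

lemma neg (hs : IsDelaySolution_s7 x y f a b g h t₀) :
    IsDelaySolution_s7 (-x) (-y) (-f) a b g h t₀ where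
  intervalIntegrable t ht := (hs.intervalIntegrable t ht).neg
  eq_add_integral t ht := by
    simp only [Pi.neg_apply, intervalIntegral.integral_neg, hs.eq_add_integral t ht]
    ring
  rhs_eq u hu := by simp only [Pi.neg_apply, hs.rhs_eq u hu]; ring

lemma intervalIntegrable_of_le (hs : IsDelaySolution_s7 x y f a b g h t₀) {s t : ℝ}
    (hs₀ : t₀ ≤ s) (ht₀ : t₀ ≤ t) : IntervalIntegrable f volume s t :=
  (hs.intervalIntegrable s hs₀).symm.trans (hs.intervalIntegrable t ht₀)

lemma sub_eq_integral_s7 (hs : IsDelaySolution_s7 x y f a b g h t₀) {s t : ℝ} (hs₀ : t₀ ≤ s)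
    (hst : s ≤ t) : x t - x s = ∫ u in s..t, f u := by
  rw [hs.eq_add_integral t (hs₀.trans hst), hs.eq_add_integral s hs₀, add_sub_add_left_eq_sub,
    intervalIntegral.integral_interval_sub_left (hs.intervalIntegrable t (hs₀.trans hst))
      (hs.intervalIntegrable s hs₀)]

lemma abs_sub_le (hs : IsDelaySolution_s7 x y f a b g h t₀) {s t C : ℝ} (hs₀ : t₀ ≤ s)
    (hst : s ≤ t) (hf : ∀ u ∈ Ioc s t, |f u| ≤ C) : |x t - x s| ≤ C * (t - s) := by
  rw [hs.sub_eq_integral_s7 hs₀ hst, ← abs_of_nonneg (sub_nonneg.mpr hst), ← Real.norm_eq_abs]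
  exact intervalIntegral.norm_integral_le_of_norm_le_const fun u hu =>
    hf u (by rwa [uIoc_of_le hst] at hu)

lemma abs_rhs_le (hs : IsDelaySolution_s7 x y f a b g h t₀)
    (hc : DelayCoeffBounds a b g h α A K σ σ') (ht₀ : 0 ≤ t₀) (hd : 0 ≤ d) (hd' : 0 ≤ d')
    (hV : ∀ u ∈ Icc (t₀ - σ') τ, |x u| ≤ d * B u ∧ |y u| ≤ d' * B u)
    {v β : ℝ} (hv : v ∈ Icc t₀ τ) (hβ : ∀ u ∈ Icc (v - σ') v, B u ≤ β) :
    |f v| ≤ (A * d + K * d') * β := by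
  have hv₀ : 0 ≤ v := ht₀.trans hv.1
  have hgv : g v ∈ Icc (v - σ') v := by
    have := hc.delay v hv₀; have := hc.delay_le; constructor <;> linarith
  have hhv : h v ∈ Icc (v - σ') v := by
    have := hc.offDelay v hv₀; constructor <;> linarith
  have hwin : Icc (v - σ') v ⊆ Icc (t₀ - σ') τ := Icc_subset_Icc (by linarith [hv.1]) hv.2
  have hx : |x (g v)| ≤ d * β := (hV _ (hwin hgv)).1.trans (by gcongr; exact hβ _ hgv)
  have hy : |y (h v)| ≤ d' * β := (hV _ (hwin hhv)).2.trans (by gcongr; exact hβ _ hhv)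
  calc |f v| ≤ |a v| * |x (g v)| + |b v| * |y (h v)| := by
        rw [hs.rhs_eq v hv.1, ← abs_mul, ← abs_mul]; exact abs_add_le _ _
    _ ≤ A * (d * β) + K * (d' * β) := by
        gcongr
        exacts [hc.diag_nonneg, hc.abs_diag_le hv₀, hc.offDiag_nonneg, hc.offDiag v hv₀]
    _ = (A * d + K * d') * β := by ring

lemma abs_sub_le_of_envelope (hs : IsDelaySolution_s7 x y f a b g h t₀)
    (hc : DelayCoeffBounds a b g h α A K σ σ') (ht₀ : 0 ≤ t₀) (hd : 0 ≤ d) (hd' : 0 ≤ d')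
    (hV : ∀ u ∈ Icc (t₀ - σ') τ, |x u| ≤ d * B u ∧ |y u| ≤ d' * B u)
    {s t β : ℝ} (hs₀ : t₀ ≤ s) (hst : s ≤ t) (htτ : t ≤ τ)
    (hβ : ∀ u ∈ Icc (s - σ') t, B u ≤ β) :
    |x t - x s| ≤ (A * d + K * d') * β * (t - s) :=
  hs.abs_sub_le hs₀ hst fun u hu =>
    hs.abs_rhs_le hc ht₀ hd hd' hV ⟨hs₀.trans hu.1.le, hu.2.trans htτ⟩ fun w hw =>
      hβ w ⟨by linarith [hw.1, hu.1], hw.2.trans hu.2⟩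

lemma abs_lt_of_abs_le_half (hs : IsDelaySolution_s7 x y f a b g h t₀)
    (hc : DelayCoeffBounds a b g h α A K σ σ') (ht₀ : 0 ≤ t₀) (hd : 0 ≤ d) (hd' : 0 ≤ d')
    (hV : ∀ u ∈ Icc (t₀ - σ') τ, |x u| ≤ d * B u ∧ |y u| ≤ d' * B u)
    (hτ : t₀ ≤ τ) (hB : ∀ u ≤ τ, B u ≤ B τ) (hBτ : 0 < B τ) {ε : ℝ} (hε : 0 ≤ ε)
    (hrate : ε * (A * d + K * d') < d / 2) (hhalf : |x (max (τ - ε) t₀)| ≤ d * B τ / 2) :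
    |x τ| < d * B τ := by
  set s := max (τ - ε) t₀
  have hsτ : s ≤ τ := max_le (by linarith) hτ
  have hτs : τ - s ≤ ε := by linarith [le_max_left (τ - ε) t₀]
  have hlip := hs.abs_sub_le_of_envelope hc ht₀ hd hd' hV (le_max_right _ _) hsτ le_rfl
    fun u hu => hB u hu.2
  have hL : 0 ≤ (A * d + K * d') * B τ := by
    have := hc.diag_nonneg; have := hc.offDiag_nonneg; positivity
  nlinarith [abs_sub_abs_le_abs_sub (x τ) (x s), mul_le_mul_of_nonneg_left hτs hL]

/-- Split `a u x(g u) = a u x(τ) + a u (x(g u) - x(τ))`; the first term carries the sign of the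
diagonal coefficient, the second is small because `x` moves slowly over the delay. -/
lemma rhs_le_of_eq (hs : IsDelaySolution_s7 x y f a b g h t₀)
    (hc : DelayCoeffBounds a b g h α A K σ σ') (ht₀ : 0 ≤ t₀) (hd : 0 ≤ d) (hd' : 0 ≤ d')
    (hV : ∀ u ∈ Icc (t₀ - σ') τ, |x u| ≤ d * B u ∧ |y u| ≤ d' * B u)
    (hτ : t₀ + σ' + 1 ≤ τ) {ε β : ℝ} (hε₁ : ε ≤ 1)
    (hβ : ∀ u ∈ Icc (τ - (2 * σ' + 1)) τ, B u ≤ β) (hβ₀ : 0 ≤ β) (hxτ : x τ = d * B τ)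
    {u : ℝ} (hu : u ∈ Icc (τ - ε) τ) :
    f u ≤ -(α * (d * B τ)) + (A * (σ + ε) * (A * d + K * d') + K * d') * β := by
  obtain ⟨hu₁, hu₂⟩ := hu
  have hσ := hc.delay_nonneg
  have hσ' := hc.delay_le
  have hA := hc.diag_nonneg
  have hK := hc.offDiag_nonneg
  have hu₀ : 0 ≤ u := by linarith
  have hgu := hc.delay u hu₀
  have hhu := hc.offDelay u hu₀
  have hxτ₀ : 0 ≤ x τ := hxτ ▸ (abs_nonneg _).trans (hV τ ⟨by linarith, le_rfl⟩).1
  have hdiag : a u * x τ ≤ -(α * (d * B τ)) :=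
    calc a u * x τ ≤ -α * x τ :=
          mul_le_mul_of_nonneg_right (by linarith [(hc.diag u hu₀).1]) hxτ₀
      _ = -(α * (d * B τ)) := by rw [hxτ]; ring
  have hlag : a u * (x (g u) - x τ) ≤ A * ((A * d + K * d') * β * (σ + ε)) :=
    calc a u * (x (g u) - x τ) ≤ |a u| * |x τ - x (g u)| := by
          rw [abs_sub_comm, ← abs_mul]; exact le_abs_self _
      _ ≤ A * ((A * d + K * d') * β * (σ + ε)) := by
          gcongr
          · exact hc.abs_diag_le hu₀
          · refine (hs.abs_sub_le_of_envelope hc ht₀ hd hd' hV (by linarith) (by linarith) le_rfl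
              fun v hv => hβ v ⟨by linarith [hv.1], hv.2⟩).trans ?_
            gcongr
            linarith
  have hoff : b u * y (h u) ≤ K * (d' * β) :=
    calc b u * y (h u) ≤ |b u| * |y (h u)| := by rw [← abs_mul]; exact le_abs_self _
      _ ≤ K * (d' * β) := by
          gcongr
          · exact hc.offDiag u hu₀
          · exact (hV (h u) ⟨by linarith, by linarith⟩).2.trans
              (by gcongr; exact hβ _ ⟨by linarith, by linarith⟩)
  calc f u = a u * x τ + a u * (x (g u) - x τ) + b u * y (h u) := by
        rw [hs.rhs_eq u (by linarith)]; ring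
    _ ≤ _ := by linarith

lemma ne_of_le_mul_exp (hs : IsDelaySolution_s7 x y f a b g h t₀)
    (hc : DelayCoeffBounds a b g h α A K σ σ') (ht₀ : 0 ≤ t₀) (hd : 0 ≤ d) (hd' : 0 ≤ d')
    (hV : ∀ u ∈ Icc (t₀ - σ') τ, |x u| ≤ d * B u ∧ |y u| ≤ d' * B u)
    (hτ : t₀ + σ' + 1 ≤ τ) {ε : ℝ} (hε : 0 < ε) (hε₁ : ε ≤ 1)
    (hB : ∀ v ≤ τ, B v ≤ B τ * exp (ε * (τ - v))) (hBτ : 0 < B τ)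
    (hrate : 2 * d * ε + (A * (σ + ε) * (A * d + K * d') + K * d') * exp (ε * (2 * σ' + 1)) <
      α * d) :
    x τ ≠ d * B τ := by
  intro hxτ
  set E := exp (ε * (2 * σ' + 1))
  have hσ' : 0 ≤ σ' := hc.delay_nonneg.trans hc.delay_le
  have hwin : ∀ u ∈ Icc (τ - (2 * σ' + 1)) τ, B u ≤ B τ * E := fun u hu =>
    (hB u hu.2).trans (mul_le_mul_of_nonneg_left (exp_le_exp.mpr (by nlinarith [hu.1])) hBτ.le)
  have hupper : x τ - x (τ - ε) ≤
      ε * (-(α * (d * B τ)) + (A * (σ + ε) * (A * d + K * d') + K * d') * (B τ * E)) := by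
    rw [hs.sub_eq_integral_s7 (by linarith) (by linarith)]
    calc ∫ u in (τ - ε)..τ, f u
        ≤ ∫ _ in (τ - ε)..τ,
            -(α * (d * B τ)) + (A * (σ + ε) * (A * d + K * d') + K * d') * (B τ * E) :=
          intervalIntegral.integral_mono_on (by linarith)
            (hs.intervalIntegrable_of_le (by linarith) (by linarith)) intervalIntegrable_const
            fun u hu => hs.rhs_le_of_eq hc ht₀ hd hd' hV hτ hε₁ hwin (by positivity) hxτ hu
      _ = _ := by simp; ring
  have hlower : -(2 * d * ε * B τ) * ε ≤ x τ - x (τ - ε) := by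
    have hx : x (τ - ε) ≤ d * (B τ * exp (ε * ε)) :=
      (le_abs_self _).trans ((hV _ ⟨by linarith, by linarith⟩).1.trans
        (by gcongr; simpa using hB (τ - ε) (by linarith)))
    have hexp : exp (ε * ε) - 1 ≤ 2 * (ε * ε) := by
      have := abs_exp_sub_one_le (x := ε * ε) (by rw [abs_mul_self]; nlinarith)
      rw [abs_mul_self] at this
      exact (le_abs_self _).trans this
    rw [hxτ]
    nlinarith [mul_le_mul_of_nonneg_left hexp (mul_nonneg hd hBτ.le)]
  nlinarith [mul_lt_mul_of_pos_left hrate (mul_pos hε hBτ)]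

end IsDelaySolution_s7

/-- The inequalities needed in the growth and in the decay phase of the barrier argument; at
`ε = 0` the second one is the weighted diagonal dominance `d' K (1 + A σ) < d (α - A² σ)`. -/
structure IsDecayRate (α A K σ σ' d d' ε : ℝ) : Prop where
  pos : 0 < ε
  le_one : ε ≤ 1
  growth : ε * (A * d + K * d') < d / 2
  decay : 2 * d * ε + (A * (σ + ε) * (A * d + K * d') + K * d') * exp (ε * (2 * σ' + 1)) < α * d

lemma eventually_isDecayRate {α A K σ σ' d d' : ℝ} (hd : 0 < d)
    (h : d' * (K * (1 + A * σ)) < d * (α - A ^ 2 * σ)) :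
    ∀ᶠ ε in 𝓝[>] 0, IsDecayRate α A K σ σ' d d' ε := by
  have hgrowth : ∀ᶠ ε in 𝓝 (0 : ℝ), ε * (A * d + K * d') < d / 2 :=
    ContinuousAt.eventually_lt (by fun_prop) continuousAt_const (by simpa using half_pos hd)
  have hdecay : ∀ᶠ ε in 𝓝 (0 : ℝ), 2 * d * ε +
      (A * (σ + ε) * (A * d + K * d') + K * d') * exp (ε * (2 * σ' + 1)) < α * d :=
    ContinuousAt.eventually_lt (by fun_prop) continuousAt_const (by simp; linarith)
  filter_upwards [self_mem_nhdsWithin, Ioc_mem_nhdsGT zero_lt_one,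
    nhdsWithin_le_nhds hgrowth, nhdsWithin_le_nhds hdecay] with ε hε hε₁ hgrow hdec
  exact ⟨hε, hε₁.2, hgrow, hdec⟩

lemma IsDelaySolution_s7.abs_ne_barrier {x y f a b g h : ℝ → ℝ} {t₀ τ α A K σ σ' d d' c μ ε : ℝ}
    (hs : IsDelaySolution_s7 x y f a b g h t₀) (hc : DelayCoeffBounds a b g h α A K σ σ')
    (hr : IsDecayRate α A K σ σ' d d' ε) (ht₀ : 0 ≤ t₀) (hd : 0 ≤ d) (hd' : 0 ≤ d')
    (hc₀ : 0 < c) (hμ : μ * ε = log 2) (hτ : t₀ < τ) (hx₀ : |x t₀| ≤ d * c / 2)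
    (hV : ∀ u ∈ Icc (t₀ - σ') τ, |x u| ≤ d * barrier c μ ε t₀ (t₀ + σ' + 1) u ∧
      |y u| ≤ d' * barrier c μ ε t₀ (t₀ + σ' + 1) u) :
    |x τ| ≠ d * barrier c μ ε t₀ (t₀ + σ' + 1) τ := by
  set B := barrier c μ ε t₀ (t₀ + σ' + 1)
  have hσ' : 0 ≤ σ' := hc.delay_nonneg.trans hc.delay_le
  have hμ₀ : 0 ≤ μ := by
    by_contra! hneg
    linarith [mul_neg_of_neg_of_pos hneg hr.pos, log_pos one_lt_two]
  have hBτ : 0 < B τ := barrier_pos hc₀ τ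
  rcases le_or_gt τ (t₀ + σ' + 1) with hgrow | hdecay
  · refine (hs.abs_lt_of_abs_le_half hc ht₀ hd hd' hV hτ.le
      (fun u hu => barrier_le_barrier hc₀.le hμ₀ hu hgrow) hBτ hr.pos.le hr.growth ?_).ne
    rcases le_total (τ - ε) t₀ with hle | hle
    · rw [max_eq_right hle]
      have hcB : c ≤ B τ :=
        (barrier_of_le le_rfl (by linarith)).symm.trans_le
          (barrier_le_barrier hc₀.le hμ₀ hτ.le hgrow)
      nlinarith
    · rw [max_eq_left hle]
      have hhalf : B (τ - ε) = B τ / 2 := by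
        have hstrip : B (τ - ε) = B τ * exp (-(μ * (τ - (τ - ε)))) :=
          barrier_eq_mul_exp hle (by linarith [hr.pos]) hgrow
        rw [hstrip, sub_sub_cancel, hμ, exp_neg, exp_log two_pos]
        ring
      calc _ ≤ d * B (τ - ε) := (hV _ ⟨by linarith, by linarith [hr.pos]⟩).1
        _ = d * B τ / 2 := by rw [hhalf]; ring
  · have hB (v : ℝ) (hv : v ≤ τ) : B v ≤ B τ * exp (ε * (τ - v)) :=
      barrier_le_mul_exp hc₀.le hμ₀ hr.pos.le hv
    intro hx
    rcases eq_or_eq_neg_of_abs_eq hx with hpos | hneg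
    · exact hs.ne_of_le_mul_exp hc ht₀ hd hd' hV hdecay.le hr.pos hr.le_one hB hBτ hr.decay hpos
    · exact hs.neg.ne_of_le_mul_exp hc ht₀ hd hd' (by simpa using hV) hdecay.le hr.pos
        hr.le_one hB hBτ hr.decay (by simp [hneg])

/-- The explicit weights work because both gaps `d₁ G₁ - d₂ c₁` and `d₂ G₂ - d₁ c₂` equal
`G₁ G₂ - c₁ c₂`. -/
lemma exists_pos_weights {G₁ G₂ c₁ c₂ : ℝ} (hG₁ : 0 < G₁) (hc₁ : 0 ≤ c₁) (hc₂ : 0 ≤ c₂)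
    (h : c₁ * c₂ < G₁ * G₂) :
    ∃ d₁ d₂ : ℝ, 0 < d₁ ∧ 0 < d₂ ∧ d₂ * c₁ < d₁ * G₁ ∧ d₁ * c₂ < d₂ * G₂ := by
  have hG₂ : 0 < G₂ := pos_of_mul_pos_right ((mul_nonneg hc₁ hc₂).trans_lt h) hG₁.le
  exact ⟨G₂ + c₁, G₁ + c₂, by linarith, by linarith, by nlinarith, by nlinarith⟩

section TwoComponents

variable {x₁ x₂ f₁ f₂ a₁₁ a₁₂ a₂₁ a₂₂ g₁₁ g₁₂ g₂₁ g₂₂ : ℝ → ℝ}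
  {t₀ α₁ α₂ A₁ A₂ A₁₂ A₂₁ σ₁ σ₂ σ' d₁ d₂ ε : ℝ}

lemma exists_weights_isDecayRate (hc₁ : DelayCoeffBounds a₁₁ a₁₂ g₁₁ g₁₂ α₁ A₁ A₁₂ σ₁ σ')
    (hc₂ : DelayCoeffBounds a₂₂ a₂₁ g₂₂ g₂₁ α₂ A₂ A₂₁ σ₂ σ') (hα₁ : 0 < α₁)
    (hσ₁ : σ₁ < α₁ / A₁ ^ 2)
    (h : A₁₂ * A₂₁ * (1 + A₁ * σ₁) * (1 + A₂ * σ₂) < (α₁ - A₁ ^ 2 * σ₁) * (α₂ - A₂ ^ 2 * σ₂)) :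
    ∃ d₁ d₂ ε : ℝ, 0 < d₁ ∧ 0 < d₂ ∧
      IsDecayRate α₁ A₁ A₁₂ σ₁ σ' d₁ d₂ ε ∧ IsDecayRate α₂ A₂ A₂₁ σ₂ σ' d₂ d₁ ε := by
  have hG₁ : 0 < α₁ - A₁ ^ 2 * σ₁ := by
    have hA₁ : 0 < A₁ := hα₁.trans_le ((hc₁.diag 0 le_rfl).1.trans (hc₁.diag 0 le_rfl).2)
    rw [lt_div_iff₀ (by positivity)] at hσ₁
    linarith
  have hc₁' : 0 ≤ A₁₂ * (1 + A₁ * σ₁) := by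
    have := hc₁.offDiag_nonneg; have := hc₁.diag_nonneg; have := hc₁.delay_nonneg; positivity
  have hc₂' : 0 ≤ A₂₁ * (1 + A₂ * σ₂) := by
    have := hc₂.offDiag_nonneg; have := hc₂.diag_nonneg; have := hc₂.delay_nonneg; positivity
  obtain ⟨d₁, d₂, hd₁, hd₂, h₁, h₂⟩ :=
    exists_pos_weights (G₂ := α₂ - A₂ ^ 2 * σ₂) hG₁ hc₁' hc₂' (by linarith)
  obtain ⟨ε, hr₁, hr₂⟩ := ((eventually_isDecayRate (σ' := σ') hd₁ h₁).and
    (eventually_isDecayRate (σ' := σ') hd₂ h₂)).exists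
  exact ⟨d₁, d₂, ε, hd₁, hd₂, hr₁, hr₂⟩

lemma abs_le_barrier {c μ : ℝ}
    (hs₁ : IsDelaySolution_s7 x₁ x₂ f₁ a₁₁ a₁₂ g₁₁ g₁₂ t₀)
    (hs₂ : IsDelaySolution_s7 x₂ x₁ f₂ a₂₂ a₂₁ g₂₂ g₂₁ t₀)
    (hc₁ : DelayCoeffBounds a₁₁ a₁₂ g₁₁ g₁₂ α₁ A₁ A₁₂ σ₁ σ')
    (hc₂ : DelayCoeffBounds a₂₂ a₂₁ g₂₂ g₂₁ α₂ A₂ A₂₁ σ₂ σ')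
    (hr₁ : IsDecayRate α₁ A₁ A₁₂ σ₁ σ' d₁ d₂ ε) (hr₂ : IsDecayRate α₂ A₂ A₂₁ σ₂ σ' d₂ d₁ ε)
    (hx₁ : Continuous x₁) (hx₂ : Continuous x₂) (ht₀ : 0 ≤ t₀) (hd₁ : 0 < d₁) (hd₂ : 0 < d₂)
    (hc : 0 < c) (hμ : μ * ε = log 2)
    (hinit : ∀ u ∈ Icc (t₀ - σ') t₀, |x₁ u| ≤ d₁ * c / 2 ∧ |x₂ u| ≤ d₂ * c / 2)
    {t : ℝ} (ht : t₀ ≤ t) :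
    |x₁ t| ≤ d₁ * barrier c μ ε t₀ (t₀ + σ' + 1) t ∧
      |x₂ t| ≤ d₂ * barrier c μ ε t₀ (t₀ + σ' + 1) t := by
  set B := barrier c μ ε t₀ (t₀ + σ' + 1)
  have hσ' : 0 ≤ σ' := hc₁.delay_nonneg.trans hc₁.delay_le
  have hBc (u : ℝ) (hu : u ≤ t₀) : B u = c := barrier_of_le hu (by linarith)
  have hx₀ := hinit t₀ ⟨by linarith, le_rfl⟩
  have hF : Continuous fun t => max (|x₁ t| - d₁ * B t) (|x₂ t| - d₂ * B t) := by
    have : Continuous B := continuous_barrier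
    fun_prop
  have hF₀ : max (|x₁ t₀| - d₁ * B t₀) (|x₂ t₀| - d₂ * B t₀) < 0 := by
    rw [hBc t₀ le_rfl, max_lt_iff]
    constructor <;> nlinarith
  have key := forall_lt_zero_of_no_first_zero hF hF₀ (fun τ hτ hle hzero => by
    have hV : ∀ u ∈ Icc (t₀ - σ') τ, |x₁ u| ≤ d₁ * B u ∧ |x₂ u| ≤ d₂ * B u := by
      rintro u ⟨hu₁, hu₂⟩
      rcases le_total u t₀ with hu | hu
      · rw [hBc u hu]
        obtain ⟨h₁, h₂⟩ := hinit u ⟨hu₁, hu⟩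
        constructor <;> nlinarith
      · obtain ⟨h₁, h₂⟩ := max_le_iff.mp (hle u ⟨hu, hu₂⟩)
        constructor <;> linarith
    rcases max_eq_iff.mp hzero with ⟨h₁, -⟩ | ⟨h₂, -⟩
    · exact hs₁.abs_ne_barrier hc₁ hr₁ ht₀ hd₁.le hd₂.le hc hμ hτ hx₀.1 hV (by linarith)
    · exact hs₂.abs_ne_barrier hc₂ hr₂ ht₀ hd₂.le hd₁.le hc hμ hτ hx₀.2
        (fun u hu => (hV u hu).symm) (by linarith)) t ht
  obtain ⟨h₁, h₂⟩ := max_lt_iff.mp key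
  constructor <;> linarith

lemma norm_le_of_initial {P : ℝ}
    (hs₁ : IsDelaySolution_s7 x₁ x₂ f₁ a₁₁ a₁₂ g₁₁ g₁₂ t₀)
    (hs₂ : IsDelaySolution_s7 x₂ x₁ f₂ a₂₂ a₂₁ g₂₂ g₂₁ t₀)
    (hc₁ : DelayCoeffBounds a₁₁ a₁₂ g₁₁ g₁₂ α₁ A₁ A₁₂ σ₁ σ')
    (hc₂ : DelayCoeffBounds a₂₂ a₂₁ g₂₂ g₂₁ α₂ A₂ A₂₁ σ₂ σ')
    (hr₁ : IsDecayRate α₁ A₁ A₁₂ σ₁ σ' d₁ d₂ ε) (hr₂ : IsDecayRate α₂ A₂ A₂₁ σ₂ σ' d₂ d₁ ε)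
    (hx₁ : Continuous x₁) (hx₂ : Continuous x₂) (ht₀ : 0 ≤ t₀) (hd₁ : 0 < d₁) (hd₂ : 0 < d₂)
    (hP : 0 < P) (hinit : ∀ u ∈ Icc (t₀ - σ') t₀, ‖(x₁ u, x₂ u)‖ ≤ P) {t : ℝ} (ht : t₀ ≤ t) :
    ‖(x₁ t, x₂ t)‖ ≤ 2 * (max d₁ d₂ / min d₁ d₂) * exp ((log 2 / ε + ε) * (σ' + 1)) *
      exp (-ε * (t - t₀)) * P := by
  have hmin : 0 < min d₁ d₂ := lt_min hd₁ hd₂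
  set c := 2 * P / min d₁ d₂
  have hc : 0 < c := by positivity
  have hPc : P = min d₁ d₂ * c / 2 := by simp only [c]; field_simp
  have hinit' : ∀ u ∈ Icc (t₀ - σ') t₀, |x₁ u| ≤ d₁ * c / 2 ∧ |x₂ u| ≤ d₂ * c / 2 := by
    intro u hu
    obtain ⟨h₁, h₂⟩ := max_le_iff.mp ((Prod.norm_def _).symm.trans_le (hinit u hu))
    simp only [Real.norm_eq_abs] at h₁ h₂
    constructor <;> nlinarith [min_le_left d₁ d₂, min_le_right d₁ d₂]
  have hμ : log 2 / ε * ε = log 2 := div_mul_cancel₀ _ hr₁.pos.ne'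
  obtain ⟨h₁, h₂⟩ := abs_le_barrier hs₁ hs₂ hc₁ hc₂ hr₁ hr₂ hx₁ hx₂ ht₀ hd₁ hd₂ hc hμ hinit' ht
  have hB := barrier_le_mul_exp_neg (t₀ := t₀) (t₁ := t₀ + σ' + 1) hc.le
    (div_nonneg (log_nonneg one_le_two) hr₁.pos.le) hr₁.pos.le t
  rw [show t₀ + σ' + 1 - t₀ = σ' + 1 by ring] at hB
  calc ‖(x₁ t, x₂ t)‖ = max |x₁ t| |x₂ t| := Prod.norm_def _
    _ ≤ max d₁ d₂ * barrier c (log 2 / ε) ε t₀ (t₀ + σ' + 1) t := by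
      have hBt : 0 ≤ barrier c (log 2 / ε) ε t₀ (t₀ + σ' + 1) t := (barrier_pos hc t).le
      exact max_le (h₁.trans (by gcongr; exact le_max_left _ _))
        (h₂.trans (by gcongr; exact le_max_right _ _))
    _ ≤ max d₁ d₂ * (c * exp ((log 2 / ε + ε) * (σ' + 1)) * exp (-ε * (t - t₀))) := by
      gcongr
    _ = _ := by simp only [c]; field_simp

end TwoComponents

theorem stmt7_general
    (a₁₁ a₁₂ a₂₁ a₂₂ : ℝ → ℝ) (α₁ α₂ A₁ A₂ A₁₂ A₂₁ : ℝ)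
    (g₁₁ g₁₂ g₂₁ g₂₂ : ℝ → ℝ) (σ₁₁ σ₁₂ σ₂₁ σ₂₂ : ℝ)
    (hα₁ : 0 < α₁) (hα₂ : 0 < α₂)
    (ha₁₁_bd : ∀ t, 0 ≤ t → α₁ ≤ -(a₁₁ t) ∧ -(a₁₁ t) ≤ A₁)
    (ha₂₂_bd : ∀ t, 0 ≤ t → α₂ ≤ -(a₂₂ t) ∧ -(a₂₂ t) ≤ A₂)
    (ha₁₂_bd : ∀ t, 0 ≤ t → |a₁₂ t| ≤ A₁₂)
    (ha₂₁_bd : ∀ t, 0 ≤ t → |a₂₁ t| ≤ A₂₁)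
    (hg₁₁ : ∀ t, 0 ≤ t → 0 ≤ t - g₁₁ t ∧ t - g₁₁ t ≤ σ₁₁)
    (hg₁₂ : ∀ t, 0 ≤ t → 0 ≤ t - g₁₂ t ∧ t - g₁₂ t ≤ σ₁₂)
    (hg₂₁ : ∀ t, 0 ≤ t → 0 ≤ t - g₂₁ t ∧ t - g₂₁ t ≤ σ₂₁)
    (hg₂₂ : ∀ t, 0 ≤ t → 0 ≤ t - g₂₂ t ∧ t - g₂₂ t ≤ σ₂₂)
    -- stability conditions
    (hcond₁ : σ₁₁ < α₁ / A₁ ^ 2)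
    (hcond₂ : (α₁ - A₁ ^ 2 * σ₁₁) * (α₂ - A₂ ^ 2 * σ₂₂) >
      A₁₂ * A₂₁ * (1 + A₁ * σ₁₁) * (1 + A₂ * σ₂₂)) :
    -- exponential stability
    ∃ M Λ : ℝ, 0 < M ∧ 0 < Λ ∧
      ∀ t₀ : ℝ, 0 ≤ t₀ → ∀ x₁ x₂ : ℝ → ℝ,
        Continuous x₁ → Continuous x₂ →
        (∀ t, t₀ ≤ t → IntervalIntegrable
            (fun s => a₁₁ s * x₁ (g₁₁ s) + a₁₂ s * x₂ (g₁₂ s)) volume t₀ t) →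
        (∀ t, t₀ ≤ t → IntervalIntegrable
            (fun s => a₂₁ s * x₁ (g₂₁ s) + a₂₂ s * x₂ (g₂₂ s)) volume t₀ t) →
        (∀ t, t₀ ≤ t →
          x₁ t = x₁ t₀ + ∫ s in t₀..t, (a₁₁ s * x₁ (g₁₁ s) + a₁₂ s * x₂ (g₁₂ s))) →
        (∀ t, t₀ ≤ t →
          x₂ t = x₂ t₀ + ∫ s in t₀..t, (a₂₁ s * x₁ (g₂₁ s) + a₂₂ s * x₂ (g₂₂ s))) →
        ∀ t, t₀ ≤ t →
          ‖(x₁ t, x₂ t)‖ ≤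
            M * Real.exp (-Λ * (t - t₀)) *
              (‖(x₁ t₀, x₂ t₀)‖ +
                sSup ((fun s => ‖(x₁ s, x₂ s)‖) ''
                  Set.Icc (t₀ - max (max σ₁₁ σ₁₂) (max σ₂₁ σ₂₂)) t₀)) := by
  set σ' := max (max σ₁₁ σ₁₂) (max σ₂₁ σ₂₂)
  have hc₁ : DelayCoeffBounds a₁₁ a₁₂ g₁₁ g₁₂ α₁ A₁ A₁₂ σ₁₁ σ' :=
    ⟨hα₁.le, ha₁₁_bd, ha₁₂_bd, hg₁₁, by simp [σ'],
      fun t ht => ⟨(hg₁₂ t ht).1, (hg₁₂ t ht).2.trans (by simp [σ'])⟩⟩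
  have hc₂ : DelayCoeffBounds a₂₂ a₂₁ g₂₂ g₂₁ α₂ A₂ A₂₁ σ₂₂ σ' :=
    ⟨hα₂.le, ha₂₂_bd, ha₂₁_bd, hg₂₂, by simp [σ'],
      fun t ht => ⟨(hg₂₁ t ht).1, (hg₂₁ t ht).2.trans (by simp [σ'])⟩⟩
  have hσ' : 0 ≤ σ' := hc₁.delay_nonneg.trans hc₁.delay_le
  obtain ⟨d₁, d₂, ε, hd₁, hd₂, hr₁, hr₂⟩ := exists_weights_isDecayRate hc₁ hc₂ hα₁ hcond₁ hcond₂
  refine ⟨2 * (max d₁ d₂ / min d₁ d₂) * exp ((log 2 / ε + ε) * (σ' + 1)), ε,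
    by have := lt_min hd₁ hd₂; positivity, hr₁.pos,
    fun t₀ ht₀ x₁ x₂ hx₁ hx₂ hi₁ hi₂ hX₁ hX₂ t ht => ?_⟩
  set K := ‖(x₁ t₀, x₂ t₀)‖ + sSup ((fun s => ‖(x₁ s, x₂ s)‖) '' Icc (t₀ - σ') t₀)
  have hinit : ∀ u ∈ Icc (t₀ - σ') t₀, ‖(x₁ u, x₂ u)‖ ≤ K := fun u hu =>
    le_add_of_nonneg_of_le (norm_nonneg _)
      (le_csSup (isCompact_Icc.image (by fun_prop)).bddAbove (mem_image_of_mem _ hu))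
  have hbound (P : ℝ) (hP : K < P) := norm_le_of_initial
    ⟨hi₁, hX₁, fun _ _ => rfl⟩ ⟨hi₂, hX₂, fun _ _ => add_comm _ _⟩ hc₁ hc₂ hr₁ hr₂ hx₁ hx₂ ht₀
    hd₁ hd₂ ((norm_nonneg _).trans_lt ((hinit t₀ ⟨by linarith, le_rfl⟩).trans_lt hP))
    (fun u hu => (hinit u hu).trans hP.le) ht
  exact ge_of_tendsto ((continuous_const_mul _).tendsto _ |>.mono_left nhdsWithin_le_nhds)
    (eventually_nhdsWithin_of_forall (s := Ioi _) hbound)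

/-- Corollary 2.8: for `m = 2`, if `σ₁₁ < α₁/A₁²` and
`(α₁ − A₁²σ₁₁)(α₂ − A₂²σ₂₂) > A₁₂A₂₁(1+A₁σ₁₁)(1+A₂σ₂₂)`, then the linear delay system
`ẋ_i(t) = Σ_{j=1}^2 a_{ij}(t) x_j(g_{ij}(t))` is exponentially stable. -/
theorem stmt7
    (a₁₁ a₁₂ a₂₁ a₂₂ : ℝ → ℝ) (α₁ α₂ A₁ A₂ A₁₂ A₂₁ : ℝ)
    (g₁₁ g₁₂ g₂₁ g₂₂ : ℝ → ℝ) (σ₁₁ σ₁₂ σ₂₁ σ₂₂ : ℝ)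
    (ha₁₁_meas : Measurable a₁₁) (ha₁₂_meas : Measurable a₁₂)
    (ha₂₁_meas : Measurable a₂₁) (ha₂₂_meas : Measurable a₂₂)
    (hα₁ : 0 < α₁) (hα₂ : 0 < α₂)
    (ha₁₁_bd : ∀ t, 0 ≤ t → α₁ ≤ -(a₁₁ t) ∧ -(a₁₁ t) ≤ A₁)
    (ha₂₂_bd : ∀ t, 0 ≤ t → α₂ ≤ -(a₂₂ t) ∧ -(a₂₂ t) ≤ A₂)
    (ha₁₂_bd : ∀ t, 0 ≤ t → |a₁₂ t| ≤ A₁₂)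
    (ha₂₁_bd : ∀ t, 0 ≤ t → |a₂₁ t| ≤ A₂₁)
    (hg₁₁_meas : Measurable g₁₁) (hg₁₂_meas : Measurable g₁₂)
    (hg₂₁_meas : Measurable g₂₁) (hg₂₂_meas : Measurable g₂₂)
    (hg₁₁ : ∀ t, 0 ≤ t → 0 ≤ t - g₁₁ t ∧ t - g₁₁ t ≤ σ₁₁)
    (hg₁₂ : ∀ t, 0 ≤ t → 0 ≤ t - g₁₂ t ∧ t - g₁₂ t ≤ σ₁₂)
    (hg₂₁ : ∀ t, 0 ≤ t → 0 ≤ t - g₂₁ t ∧ t - g₂₁ t ≤ σ₂₁)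
    (hg₂₂ : ∀ t, 0 ≤ t → 0 ≤ t - g₂₂ t ∧ t - g₂₂ t ≤ σ₂₂)
    -- stability conditions
    (hcond₁ : σ₁₁ < α₁ / A₁ ^ 2)
    (hcond₂ : (α₁ - A₁ ^ 2 * σ₁₁) * (α₂ - A₂ ^ 2 * σ₂₂) >
      A₁₂ * A₂₁ * (1 + A₁ * σ₁₁) * (1 + A₂ * σ₂₂)) :
    -- exponential stability
    ∃ M Λ : ℝ, 0 < M ∧ 0 < Λ ∧
      ∀ t₀ : ℝ, 0 ≤ t₀ → ∀ x₁ x₂ : ℝ → ℝ,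
        Continuous x₁ → Continuous x₂ →
        (∀ t, t₀ ≤ t → IntervalIntegrable
            (fun s => a₁₁ s * x₁ (g₁₁ s) + a₁₂ s * x₂ (g₁₂ s)) volume t₀ t) →
        (∀ t, t₀ ≤ t → IntervalIntegrable
            (fun s => a₂₁ s * x₁ (g₂₁ s) + a₂₂ s * x₂ (g₂₂ s)) volume t₀ t) →
        (∀ t, t₀ ≤ t →
          x₁ t = x₁ t₀ + ∫ s in t₀..t, (a₁₁ s * x₁ (g₁₁ s) + a₁₂ s * x₂ (g₁₂ s))) →
        (∀ t, t₀ ≤ t →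
          x₂ t = x₂ t₀ + ∫ s in t₀..t, (a₂₁ s * x₁ (g₂₁ s) + a₂₂ s * x₂ (g₂₂ s))) →
        ∀ t, t₀ ≤ t →
          ‖(x₁ t, x₂ t)‖ ≤
            M * Real.exp (-Λ * (t - t₀)) *
              (‖(x₁ t₀, x₂ t₀)‖ +
                sSup ((fun s => ‖(x₁ s, x₂ s)‖) ''
                  Set.Icc (t₀ - max (max σ₁₁ σ₁₂) (max σ₂₁ σ₂₂)) t₀)) :=
  stmt7_general a₁₁ a₁₂ a₂₁ a₂₂ α₁ α₂ A₁ A₂ A₁₂ A₂₁ g₁₁ g₁₂ g₂₁ g₂₂ σ₁₁ σ₁₂ σ₂₁ σ₂₂ hα₁ hα₂ ha₁₁_bd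
    ha₂₂_bd ha₁₂_bd ha₂₁_bd hg₁₁ hg₁₂ hg₂₁ hg₂₂ hcond₁ hcond₂
end

section
/- Suppose m = 2 and α_1α_2 > A_12 A_21. Then the linear system ẋ_1(t) = −a_1(t)x_1(t) + a_{12}(t)x_2(g_{12}(t)), ẋ_2(t) = −a_2(t)x_2(t) + a_{21}(t)x_1(g_{21}(t)) is exponentially stable. -/
set_option maxHeartbeats 1000000


open MeasureTheory

/-- Core integral estimate: if `x` satisfies the integral equation
`x t = x t' + ∫ (-(b s) x s + h s)`, with `b ≥ α`, `|h| ≤ Q`, a lower bound on `x`,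
then `x` decays linearly at rate `lam`. -/
private lemma coreEst (x h b : ℝ → ℝ) (t' δ α lam WP Q ε' : ℝ)
    (heq : ∀ t, t' ≤ t → x t = x t' + ∫ s in t'..t, (-(b s) * x s + h s))
    (hint : ∀ t, t' ≤ t →
      IntervalIntegrable (fun s => -(b s) * x s + h s) MeasureTheory.volume t' t)
    (hx' : x t' = WP)
    (hb : ∀ s, t' ≤ s → s ≤ t' + δ → α ≤ b s)
    (hh : ∀ s, t' ≤ s → s ≤ t' + δ → |h s| ≤ Q)
    (hlow : ∀ s, t' ≤ s → s ≤ t' + δ → WP - ε' ≤ x s)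
    (hα : 0 ≤ α) (hlow0 : 0 ≤ WP - ε')
    (hkey : -(α * (WP - ε')) + Q ≤ -(lam * WP)) :
    ∀ t, t' ≤ t → t ≤ t' + δ → x t ≤ WP - lam * WP * (t - t') := by
  intro t ht1 ht2
  have hmono : (∫ s in t'..t, (-(b s) * x s + h s)) ≤ ∫ _s in t'..t, (-(lam * WP)) := by
    apply intervalIntegral.integral_mono_on ht1 (hint t ht1) intervalIntegrable_const
    intro s hs
    have hs1 : t' ≤ s := hs.1
    have hs2 : s ≤ t' + δ := hs.2.trans ht2
    have hxl := hlow s hs1 hs2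
    have h1 : α * x s ≤ b s * x s :=
      mul_le_mul_of_nonneg_right (hb s hs1 hs2) (hlow0.trans hxl)
    have h2 : α * (WP - ε') ≤ α * x s := mul_le_mul_of_nonneg_left hxl hα
    have h3 : h s ≤ Q := (le_abs_self _).trans (hh s hs1 hs2)
    linarith
  rw [intervalIntegral.integral_const, smul_eq_mul] at hmono
  have hxt := heq t ht1
  rw [hx'] at hxt
  have hring : (t - t') * (-(lam * WP)) = -(lam * WP * (t - t')) := by ring
  linarith

/-- Crossing estimate for the component equal to its bound (positive sign). -/
private lemma crossPos (x h a : ℝ → ℝ) (tt δ₀ α lam WP Q ε' : ℝ)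
    (hα : 0 < α) (hlam : 0 < lam) (hWP : 0 < WP) (hε' : 0 < ε')
    (heq : ∀ t, tt ≤ t → x t = x tt + ∫ s in tt..t, (-(a s) * x s + h s))
    (hint : ∀ t, tt ≤ t →
      IntervalIntegrable (fun s => -(a s) * x s + h s) MeasureTheory.volume tt t)
    (hx : x tt = WP)
    (ha : ∀ s, tt ≤ s → s ≤ tt + δ₀ → α ≤ a s)
    (hh : ∀ s, tt ≤ s → s ≤ tt + δ₀ → |h s| ≤ Q)
    (hδx : ∀ s, tt ≤ s → s ≤ tt + δ₀ → |x s - x tt| ≤ ε')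
    (hε'WP : ε' ≤ WP)
    (hkey : -(α * (WP - ε')) + Q ≤ -(lam * WP)) :
    ∀ t, tt ≤ t → t ≤ tt + δ₀ → |x t| ≤ WP * Real.exp (-(lam * (t - tt))) := by
  have hlow : ∀ s, tt ≤ s → s ≤ tt + δ₀ → WP - ε' ≤ x s := by
    intro s h1 h2
    have h3 := abs_le.mp (hδx s h1 h2)
    rw [hx] at h3
    linarith [h3.1]
  have upper := coreEst x h a tt δ₀ α lam WP Q ε' heq hint hx ha hh hlow hα.le
    (by linarith) hkey
  intro t h1 h2
  have hup := upper t h1 h2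
  have hlo := hlow t h1 h2
  have hone : 1 - lam * (t - tt) ≤ Real.exp (-(lam * (t - tt))) := by
    have := Real.add_one_le_exp (-(lam * (t - tt))); linarith
  have hE : 0 < Real.exp (-(lam * (t - tt))) := Real.exp_pos _
  have hmul : WP * (1 - lam * (t - tt)) ≤ WP * Real.exp (-(lam * (t - tt))) :=
    mul_le_mul_of_nonneg_left hone hWP.le
  have hring : WP - lam * WP * (t - tt) = WP * (1 - lam * (t - tt)) := by ring
  have hpos := mul_pos hWP hE
  rw [abs_le]
  constructor
  · linarith
  · linarith

/-- Crossing lemma for one component. -/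
private lemma crossAux (x y a c g : ℝ → ℝ)
    (α Ac lam w wy σ t₀ Kε tt δ₀ ε' : ℝ)
    (ht₀ : 0 ≤ t₀) (htt : t₀ ≤ tt) (hσ : 0 ≤ σ)
    (hα : 0 < α) (hAc : 0 ≤ Ac) (hlam : 0 < lam) (hw : 1 ≤ w) (hwy : 1 ≤ wy)
    (hKε : 0 < Kε)
    (ha : ∀ s, 0 ≤ s → α ≤ a s) (hc : ∀ s, 0 ≤ s → |c s| ≤ Ac)
    (hg : ∀ s, 0 ≤ s → 0 ≤ s - g s ∧ s - g s ≤ σ)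
    (hist : ∀ u, t₀ - σ ≤ u → u ≤ t₀ → |y u| ≤ Kε)
    (goody : ∀ u, t₀ ≤ u → u ≤ tt → |y u| ≤ wy * Real.exp (-(lam * (u - t₀))) * Kε)
    (goodxt : |x tt| ≤ w * Real.exp (-(lam * (tt - t₀))) * Kε)
    (hx_cont : Continuous x)
    (hint : ∀ t, tt ≤ t →
      IntervalIntegrable (fun s => -(a s) * x s + c s * y (g s)) MeasureTheory.volume tt t)
    (heq : ∀ t, tt ≤ t →
      x t = x tt + ∫ s in tt..t, (-(a s) * x s + c s * y (g s)))
    (hε' : 0 < ε')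
    (hkey : (α + Ac) * ε' ≤
      ((α - lam) * w - Ac * wy * Real.exp (lam * σ)) * (Real.exp (-(lam * (tt - t₀))) * Kε))
    (hδ₀ : 0 < δ₀)
    (hδ₀x : ∀ s, |s - tt| ≤ δ₀ → |x s - x tt| ≤ ε')
    (hδ₀y : ∀ s, |s - tt| ≤ δ₀ → |y s - y tt| ≤ ε') :
    ∃ δ, 0 < δ ∧ ∀ t, tt ≤ t → t ≤ tt + δ →
      |x t| ≤ w * Real.exp (-(lam * (t - t₀))) * Kε := by
  set P : ℝ := Real.exp (-(lam * (tt - t₀))) * Kε with hPdef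
  have hP : 0 < P := mul_pos (Real.exp_pos _) hKε
  have hexpσ : (1:ℝ) ≤ Real.exp (lam * σ) := Real.one_le_exp (by positivity)
  have hw0 : 0 < w := lt_of_lt_of_le one_pos hw
  have hwy0 : 0 < wy := lt_of_lt_of_le one_pos hwy
  have hWP : 0 < w * P := mul_pos hw0 hP
  have hε'le : ε' ≤ w * P := by
    have h1 : ((α - lam) * w - Ac * wy * Real.exp (lam * σ)) ≤ α * w := by
      nlinarith [Real.exp_pos (lam * σ), mul_pos hlam hw0, mul_nonneg (mul_nonneg hAc hwy0.le) (Real.exp_pos (lam*σ)).le]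
    have h2 : ((α - lam) * w - Ac * wy * Real.exp (lam * σ)) * P ≤ α * w * P :=
      mul_le_mul_of_nonneg_right h1 hP.le
    have h3 : α * ε' ≤ (α + Ac) * ε' := by nlinarith
    have h5 : α * w * P = α * (w * P) := by ring
    have h4 : α * ε' ≤ α * (w * P) := by linarith [hkey]
    exact le_of_mul_le_mul_left h4 hα
  -- the forcing bound
  have forcing : ∀ s, tt ≤ s → s ≤ tt + δ₀ →
      |c s * y (g s)| ≤ Ac * (wy * Real.exp (lam * σ) * P + ε') := by
    intro s hs1 hs2
    have hs0 : (0:ℝ) ≤ s := le_trans (le_trans ht₀ htt) hs1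
    obtain ⟨hg1, hg2⟩ := hg s hs0
    have hy : |y (g s)| ≤ wy * Real.exp (lam * σ) * P + ε' := by
      rcases lt_or_ge (g s) t₀ with h1 | h1
      · have hyb := hist (g s) (by linarith) h1.le
        have h2 : tt - t₀ ≤ σ := by linarith
        have hu : (1:ℝ) ≤ Real.exp (lam * σ) * Real.exp (-(lam * (tt - t₀))) := by
          rw [← Real.exp_add]
          apply Real.one_le_exp
          nlinarith
        have h5 : Kε ≤ wy * Real.exp (lam * σ) * P := by
          have hq : 1 * Kε ≤ (Real.exp (lam * σ) * Real.exp (-(lam * (tt - t₀)))) * Kε :=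
            mul_le_mul_of_nonneg_right hu hKε.le
          have hq2 : (Real.exp (lam * σ) * Real.exp (-(lam * (tt - t₀)))) * Kε ≤
              wy * ((Real.exp (lam * σ) * Real.exp (-(lam * (tt - t₀)))) * Kε) :=
            le_mul_of_one_le_left (by positivity) hwy
          have hq3 : wy * ((Real.exp (lam * σ) * Real.exp (-(lam * (tt - t₀)))) * Kε) =
              wy * Real.exp (lam * σ) * P := by rw [hPdef]; ring
          linarith
        linarith
      · rcases le_or_gt (g s) tt with h2 | h2
        · have hyb := goody (g s) h1 h2
          have h3 : Real.exp (-(lam * (g s - t₀))) ≤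
              Real.exp (lam * σ) * Real.exp (-(lam * (tt - t₀))) := by
            rw [← Real.exp_add]
            apply Real.exp_le_exp.mpr
            nlinarith
          have h4 : wy * Real.exp (-(lam * (g s - t₀))) * Kε ≤
              wy * Real.exp (lam * σ) * P := by
            have hq := mul_le_mul_of_nonneg_right
              (mul_le_mul_of_nonneg_left h3 hwy0.le) hKε.le
            have hq2 : wy * (Real.exp (lam * σ) * Real.exp (-(lam * (tt - t₀)))) * Kε =
                wy * Real.exp (lam * σ) * P := by rw [hPdef]; ring
            linarith
          linarith
        · have h3 : |g s - tt| ≤ δ₀ := abs_le.mpr ⟨by linarith, by linarith⟩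
          have h4 := hδ₀y (g s) h3
          have h5 : |y (g s)| ≤ |y tt| + ε' := by
            have := abs_sub_abs_le_abs_sub (y (g s)) (y tt); linarith
          have h6 : |y tt| ≤ wy * Real.exp (-(lam * (tt - t₀))) * Kε := goody tt htt le_rfl
          have h7 : wy * Real.exp (-(lam * (tt - t₀))) * Kε = wy * P := by rw [hPdef]; ring
          have h8 : wy * P ≤ wy * Real.exp (lam * σ) * P := by
            nlinarith [mul_le_mul_of_nonneg_left hexpσ (mul_nonneg hwy0.le hP.le)]
          linarith
    calc |c s * y (g s)| = |c s| * |y (g s)| := abs_mul _ _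
      _ ≤ Ac * (wy * Real.exp (lam * σ) * P + ε') :=
          mul_le_mul (hc s hs0) hy (abs_nonneg _) hAc
  have hkey' : -(α * (w * P - ε')) + Ac * (wy * Real.exp (lam * σ) * P + ε') ≤
      -(lam * (w * P)) := by nlinarith [hkey]
  have hgoodxtP : |x tt| ≤ w * P := by
    calc |x tt| ≤ w * Real.exp (-(lam * (tt - t₀))) * Kε := goodxt
      _ = w * P := by rw [hPdef]; ring
  rcases lt_or_eq_of_le hgoodxtP with hlt | heqc
  · -- strict inequality at tt : use continuity
    have hfc : Continuous (fun t => w * Real.exp (-(lam * (t - t₀))) * Kε - |x t|) := by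
      apply Continuous.sub
      · exact (continuous_const.mul (Real.continuous_exp.comp
          ((continuous_const.mul (continuous_id.sub continuous_const)).neg))).mul
          continuous_const
      · exact hx_cont.abs
    have hf0 : 0 < w * Real.exp (-(lam * (tt - t₀))) * Kε - |x tt| := by
      have : w * Real.exp (-(lam * (tt - t₀))) * Kε = w * P := by rw [hPdef]; ring
      rw [this]; linarith
    obtain ⟨δ₁, hδ₁, hball⟩ := Metric.continuousAt_iff.mp hfc.continuousAt
      (w * Real.exp (-(lam * (tt - t₀))) * Kε - |x tt|) hf0
    refine ⟨δ₁ / 2, by positivity, ?_⟩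
    intro t h1 h2
    have hd : dist t tt < δ₁ := by
      rw [Real.dist_eq, abs_of_nonneg (by linarith)]
      linarith
    have h3 := hball hd
    rw [Real.dist_eq] at h3
    have h4 := abs_lt.mp h3
    linarith [h4.1]
  · -- equality case
    rcases (abs_eq hWP.le).mp heqc with hxeq | hxeq
    · -- x tt = w * P
      have hres := crossPos x (fun s => c s * y (g s)) a tt δ₀ α lam (w * P)
        (Ac * (wy * Real.exp (lam * σ) * P + ε')) ε' hα hlam hWP hε' heq hint hxeq
        (fun s h1 h2 => ha s (by linarith))
        forcing
        (fun s h1 h2 => hδ₀x s (abs_le.mpr ⟨by linarith, by linarith⟩))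
        hε'le hkey'
      refine ⟨δ₀, hδ₀, ?_⟩
      intro t h1 h2
      have hb := hres t h1 h2
      have hexp : Real.exp (-(lam * (tt - t₀))) * Real.exp (-(lam * (t - tt))) =
          Real.exp (-(lam * (t - t₀))) := by
        rw [← Real.exp_add]; congr 1; ring
      calc |x t| ≤ w * P * Real.exp (-(lam * (t - tt))) := hb
        _ = w * Real.exp (-(lam * (t - t₀))) * Kε := by rw [hPdef, ← hexp]; ring
    · -- x tt = -(w * P)
      have hfun : (fun s => -(a s) * (-(x s)) + -(c s * y (g s))) =
          fun s => -(-(a s) * x s + c s * y (g s)) := by funext s; ring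
      have hint' : ∀ t, tt ≤ t →
          IntervalIntegrable (fun s => -(a s) * (-(x s)) + -(c s * y (g s)))
            MeasureTheory.volume tt t := by
        intro t ht
        rw [hfun]
        exact (hint t ht).neg
      have heq' : ∀ t, tt ≤ t →
          -(x t) = -(x tt) + ∫ s in tt..t, (-(a s) * (-(x s)) + -(c s * y (g s))) := by
        intro t ht
        have h0 := heq t ht
        have h1 : (∫ s in tt..t, (-(a s) * (-(x s)) + -(c s * y (g s)))) =
            -∫ s in tt..t, (-(a s) * x s + c s * y (g s)) := by
          rw [hfun]
          exact intervalIntegral.integral_neg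
        rw [h1]
        linarith
      have hres := crossPos (fun s => -(x s)) (fun s => -(c s * y (g s))) a tt δ₀ α lam
        (w * P) (Ac * (wy * Real.exp (lam * σ) * P + ε')) ε' hα hlam hWP hε' heq' hint'
        (by show -(x tt) = w * P; rw [hxeq]; ring)
        (fun s h1 h2 => ha s (by linarith))
        (fun s h1 h2 => by rw [abs_neg]; exact forcing s h1 h2)
        (fun s h1 h2 => by
          have : -(x s) - -(x tt) = -(x s - x tt) := by ring
          rw [this, abs_neg]
          exact hδ₀x s (abs_le.mpr ⟨by linarith, by linarith⟩))
        hε'le hkey'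
      refine ⟨δ₀, hδ₀, ?_⟩
      intro t h1 h2
      have hb := hres t h1 h2
      rw [abs_neg] at hb
      have hexp : Real.exp (-(lam * (tt - t₀))) * Real.exp (-(lam * (t - tt))) =
          Real.exp (-(lam * (t - t₀))) := by
        rw [← Real.exp_add]; congr 1; ring
      calc |x t| ≤ w * P * Real.exp (-(lam * (t - tt))) := hb
        _ = w * Real.exp (-(lam * (t - t₀))) * Kε := by rw [hPdef, ← hexp]; ring

/-- Corollary 2.9: for `m = 2`, if `α₁α₂ > A₁₂A₂₁`, then the linear system
`ẋ₁(t) = −a₁(t)x₁(t) + a₁₂(t)x₂(g₁₂(t))`, `ẋ₂(t) = −a₂(t)x₂(t) + a₂₁(t)x₁(g₂₁(t))`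
is exponentially stable. -/
theorem stmt8
    (a₁ a₂ a₁₂ a₂₁ : ℝ → ℝ) (α₁ α₂ A₁ A₂ A₁₂ A₂₁ : ℝ)
    (g₁₂ g₂₁ : ℝ → ℝ) (σ : ℝ)
    (ha₁_meas : Measurable a₁) (ha₂_meas : Measurable a₂)
    (ha₁₂_meas : Measurable a₁₂) (ha₂₁_meas : Measurable a₂₁)
    (hα₁ : 0 < α₁) (hα₂ : 0 < α₂)
    (ha₁_bd : ∀ t, 0 ≤ t → α₁ ≤ a₁ t ∧ a₁ t ≤ A₁)
    (ha₂_bd : ∀ t, 0 ≤ t → α₂ ≤ a₂ t ∧ a₂ t ≤ A₂)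
    (ha₁₂_bd : ∀ t, 0 ≤ t → |a₁₂ t| ≤ A₁₂)
    (ha₂₁_bd : ∀ t, 0 ≤ t → |a₂₁ t| ≤ A₂₁)
    (hg₁₂_meas : Measurable g₁₂) (hg₂₁_meas : Measurable g₂₁)
    (hg₁₂ : ∀ t, 0 ≤ t → 0 ≤ t - g₁₂ t ∧ t - g₁₂ t ≤ σ)
    (hg₂₁ : ∀ t, 0 ≤ t → 0 ≤ t - g₂₁ t ∧ t - g₂₁ t ≤ σ)
    -- stability condition
    (hcond : α₁ * α₂ > A₁₂ * A₂₁) :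
    -- exponential stability
    ∃ M Λ : ℝ, 0 < M ∧ 0 < Λ ∧
      ∀ t₀ : ℝ, 0 ≤ t₀ → ∀ x₁ x₂ : ℝ → ℝ,
        Continuous x₁ → Continuous x₂ →
        (∀ t, t₀ ≤ t → IntervalIntegrable
            (fun s => -(a₁ s) * x₁ s + a₁₂ s * x₂ (g₁₂ s)) volume t₀ t) →
        (∀ t, t₀ ≤ t → IntervalIntegrable
            (fun s => -(a₂ s) * x₂ s + a₂₁ s * x₁ (g₂₁ s)) volume t₀ t) →
        (∀ t, t₀ ≤ t →
          x₁ t = x₁ t₀ + ∫ s in t₀..t, (-(a₁ s) * x₁ s + a₁₂ s * x₂ (g₁₂ s))) →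
        (∀ t, t₀ ≤ t →
          x₂ t = x₂ t₀ + ∫ s in t₀..t, (-(a₂ s) * x₂ s + a₂₁ s * x₁ (g₂₁ s))) →
        ∀ t, t₀ ≤ t →
          ‖(x₁ t, x₂ t)‖ ≤
            M * Real.exp (-Λ * (t - t₀)) *
              (‖(x₁ t₀, x₂ t₀)‖ +
                sSup ((fun s => ‖(x₁ s, x₂ s)‖) '' Set.Icc (t₀ - σ) t₀)) := by
  have hA12 : 0 ≤ A₁₂ := (abs_nonneg _).trans (ha₁₂_bd 0 le_rfl)
  have hA21 : 0 ≤ A₂₁ := (abs_nonneg _).trans (ha₂₁_bd 0 le_rfl)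
  have hσ : 0 ≤ σ := (hg₁₂ 0 le_rfl).1.trans (hg₁₂ 0 le_rfl).2
  -- choose weights
  obtain ⟨w₁, w₂, hw₁, hw₂, hWa, hWb⟩ :
      ∃ w₁ w₂ : ℝ, 1 ≤ w₁ ∧ 1 ≤ w₂ ∧ A₁₂ * w₂ < α₁ * w₁ ∧ A₂₁ * w₁ < α₂ * w₂ := by
    have hd₁ : 0 < A₁₂ + α₂ := by linarith
    have hd₂ : 0 < α₁ + A₂₁ := by linarith
    have hcpos : 0 < 1 / (A₁₂ + α₂) + 1 / (α₁ + A₂₁) := by positivity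
    refine ⟨(1 / (A₁₂ + α₂) + 1 / (α₁ + A₂₁)) * (A₁₂ + α₂),
            (1 / (A₁₂ + α₂) + 1 / (α₁ + A₂₁)) * (α₁ + A₂₁), ?_, ?_, ?_, ?_⟩
    · rw [add_mul]
      have h1 : 1 / (A₁₂ + α₂) * (A₁₂ + α₂) = 1 := by field_simp
      have h2 : 0 ≤ 1 / (α₁ + A₂₁) * (A₁₂ + α₂) := by positivity
      linarith
    · rw [add_mul]
      have h1 : 1 / (α₁ + A₂₁) * (α₁ + A₂₁) = 1 := by field_simp
      have h2 : 0 ≤ 1 / (A₁₂ + α₂) * (α₁ + A₂₁) := by positivity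
      linarith
    · have hbase : A₁₂ * (α₁ + A₂₁) < α₁ * (A₁₂ + α₂) := by nlinarith
      nlinarith
    · have hbase : A₂₁ * (A₁₂ + α₂) < α₂ * (α₁ + A₂₁) := by nlinarith
      nlinarith
  have hw₁0 : 0 < w₁ := lt_of_lt_of_le one_pos hw₁
  have hw₂0 : 0 < w₂ := lt_of_lt_of_le one_pos hw₂
  -- choose lam
  obtain ⟨lam, hL, hlam⟩ :
      ∃ lam : ℝ, (A₁₂ * w₂ * Real.exp (lam * σ) + lam * w₁ < α₁ * w₁ ∧
        A₂₁ * w₁ * Real.exp (lam * σ) + lam * w₂ < α₂ * w₂) ∧ lam ∈ Set.Ioi (0:ℝ) := by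
    have hc1 : Continuous fun l : ℝ => A₁₂ * w₂ * Real.exp (l * σ) + l * w₁ := by
      apply Continuous.add
      · exact continuous_const.mul (Real.continuous_exp.comp (continuous_id.mul continuous_const))
      · exact continuous_id.mul continuous_const
    have hc2 : Continuous fun l : ℝ => A₂₁ * w₁ * Real.exp (l * σ) + l * w₂ := by
      apply Continuous.add
      · exact continuous_const.mul (Real.continuous_exp.comp (continuous_id.mul continuous_const))
      · exact continuous_id.mul continuous_const
    have h10 : A₁₂ * w₂ * Real.exp ((0:ℝ) * σ) + (0:ℝ) * w₁ < α₁ * w₁ := by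
      simpa using hWa
    have h20 : A₂₁ * w₁ * Real.exp ((0:ℝ) * σ) + (0:ℝ) * w₂ < α₂ * w₂ := by
      simpa using hWb
    have ev1 := Filter.Tendsto.eventually_lt_const h10 (hc1.continuousAt (x := (0:ℝ)))
    have ev2 := Filter.Tendsto.eventually_lt_const h20 (hc2.continuousAt (x := (0:ℝ)))
    have ev : ∀ᶠ l in nhdsWithin (0:ℝ) (Set.Ioi 0),
        (A₁₂ * w₂ * Real.exp (l * σ) + l * w₁ < α₁ * w₁ ∧
         A₂₁ * w₁ * Real.exp (l * σ) + l * w₂ < α₂ * w₂) :=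
      (ev1.and ev2).filter_mono nhdsWithin_le_nhds
    exact (ev.and eventually_mem_nhdsWithin).exists
  rw [Set.mem_Ioi] at hlam
  have hL1 := hL.1
  have hL2 := hL.2
  refine ⟨max w₁ w₂, lam, lt_of_lt_of_le one_pos (le_trans hw₁ (le_max_left _ _)), hlam, ?_⟩
  intro t₀ ht₀ x₁ x₂ hc₁ hc₂ hI₁ hI₂ hE₁ hE₂ t ht
  set S : ℝ := sSup ((fun s => ‖(x₁ s, x₂ s)‖) '' Set.Icc (t₀ - σ) t₀) with hSdef
  set K : ℝ := ‖(x₁ t₀, x₂ t₀)‖ + S with hKdef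
  have hIccne : (Set.Icc (t₀ - σ) t₀).Nonempty := ⟨t₀, by constructor <;> linarith⟩
  have hnormc : Continuous fun s => ‖(x₁ s, x₂ s)‖ := (hc₁.prodMk hc₂).norm
  have hbdd : BddAbove ((fun s => ‖(x₁ s, x₂ s)‖) '' Set.Icc (t₀ - σ) t₀) :=
    (isCompact_Icc.image hnormc).bddAbove
  have hSle : ∀ u, t₀ - σ ≤ u → u ≤ t₀ → ‖(x₁ u, x₂ u)‖ ≤ S := by
    intro u h1 h2
    exact le_csSup hbdd ⟨u, ⟨h1, h2⟩, rfl⟩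
  have hS0 : 0 ≤ S := le_trans (norm_nonneg _) (hSle t₀ (by linarith) le_rfl)
  have hK0 : 0 ≤ K := by
    rw [hKdef]; positivity
  have hSK : S ≤ K := by
    rw [hKdef]
    have := norm_nonneg (x₁ t₀, x₂ t₀)
    linarith
  -- the main claim
  have main : ∀ ε : ℝ, 0 < ε → ∀ T, t₀ ≤ T →
      (|x₁ T| ≤ w₁ * Real.exp (-(lam * (T - t₀))) * (K + ε) ∧
       |x₂ T| ≤ w₂ * Real.exp (-(lam * (T - t₀))) * (K + ε)) := by
    intro ε hε
    by_contra hcon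
    obtain ⟨T, hTcon⟩ := not_forall.mp hcon
    rw [Classical.not_imp] at hTcon
    obtain ⟨hT, hTbad⟩ := hTcon
    set Kε : ℝ := K + ε with hKεdef
    have hKε : 0 < Kε := by rw [hKεdef]; linarith
    set B : Set ℝ := {u : ℝ | t₀ ≤ u ∧
      ¬(|x₁ u| ≤ w₁ * Real.exp (-(lam * (u - t₀))) * Kε ∧
        |x₂ u| ≤ w₂ * Real.exp (-(lam * (u - t₀))) * Kε)} with hBdef
    have hBne : B.Nonempty := ⟨T, hT, hTbad⟩
    have hBbd : BddBelow B := ⟨t₀, fun b hb => hb.1⟩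
    set tt : ℝ := sInf B with httdef
    have htt0 : t₀ ≤ tt := le_csInf hBne fun b hb => hb.1
    have hgood0 : |x₁ t₀| ≤ w₁ * Real.exp (-(lam * (t₀ - t₀))) * Kε ∧
        |x₂ t₀| ≤ w₂ * Real.exp (-(lam * (t₀ - t₀))) * Kε := by
      have he : Real.exp (-(lam * (t₀ - t₀))) = 1 := by simp
      have h1 : |x₁ t₀| ≤ K := by
        rw [hKdef, ← Real.norm_eq_abs]
        have := norm_fst_le (x₁ t₀, x₂ t₀)
        simp only at this
        linarith
      have h2 : |x₂ t₀| ≤ K := by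
        rw [hKdef, ← Real.norm_eq_abs]
        have := norm_snd_le (x₁ t₀, x₂ t₀)
        simp only at this
        linarith
      rw [he]
      constructor <;> nlinarith
    have hgoodbelow : ∀ s, t₀ ≤ s → s < tt →
        (|x₁ s| ≤ w₁ * Real.exp (-(lam * (s - t₀))) * Kε ∧
         |x₂ s| ≤ w₂ * Real.exp (-(lam * (s - t₀))) * Kε) := by
      intro s h1 h2
      by_contra hbad
      have hsB : s ∈ B := ⟨h1, hbad⟩
      have := csInf_le hBbd hsB
      rw [← httdef] at this
      linarith
    have hclosed : IsClosed {s : ℝ |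
        |x₁ s| ≤ w₁ * Real.exp (-(lam * (s - t₀))) * Kε ∧
        |x₂ s| ≤ w₂ * Real.exp (-(lam * (s - t₀))) * Kε} := by
      have hbc : ∀ w' : ℝ, Continuous fun s : ℝ => w' * Real.exp (-(lam * (s - t₀))) * Kε :=
        fun w' => (continuous_const.mul (Real.continuous_exp.comp
          ((continuous_const.mul (continuous_id.sub continuous_const)).neg))).mul
          continuous_const
      exact (isClosed_le hc₁.abs (hbc w₁)).inter (isClosed_le hc₂.abs (hbc w₂))
    have hgoodtt : |x₁ tt| ≤ w₁ * Real.exp (-(lam * (tt - t₀))) * Kε ∧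
        |x₂ tt| ≤ w₂ * Real.exp (-(lam * (tt - t₀))) * Kε := by
      rcases eq_or_lt_of_le htt0 with he | hlt
      · rw [← he]; exact hgood0
      · have hsub : Set.Ico t₀ tt ⊆ {s : ℝ |
            |x₁ s| ≤ w₁ * Real.exp (-(lam * (s - t₀))) * Kε ∧
            |x₂ s| ≤ w₂ * Real.exp (-(lam * (s - t₀))) * Kε} :=
          fun s hs => hgoodbelow s hs.1 hs.2
        have hmem : tt ∈ closure (Set.Ico t₀ tt) := by
          rw [closure_Ico hlt.ne]
          exact ⟨hlt.le, le_rfl⟩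
        exact hclosed.closure_subset_iff.mpr hsub hmem
    have goodIcc : ∀ u, t₀ ≤ u → u ≤ tt →
        (|x₁ u| ≤ w₁ * Real.exp (-(lam * (u - t₀))) * Kε ∧
         |x₂ u| ≤ w₂ * Real.exp (-(lam * (u - t₀))) * Kε) := by
      intro u h1 h2
      rcases lt_or_eq_of_le h2 with h3 | h3
      · exact hgoodbelow u h1 h3
      · rw [h3]; exact hgoodtt
    -- choose ε'
    set P : ℝ := Real.exp (-(lam * (tt - t₀))) * Kε with hPdef
    have hP : 0 < P := mul_pos (Real.exp_pos _) hKε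
    have hfac₁ : 0 < (α₁ - lam) * w₁ - A₁₂ * w₂ * Real.exp (lam * σ) := by nlinarith [hL1]
    have hfac₂ : 0 < (α₂ - lam) * w₂ - A₂₁ * w₁ * Real.exp (lam * σ) := by nlinarith [hL2]
    set η₁ : ℝ := ((α₁ - lam) * w₁ - A₁₂ * w₂ * Real.exp (lam * σ)) * P with hη₁def
    set η₂ : ℝ := ((α₂ - lam) * w₂ - A₂₁ * w₁ * Real.exp (lam * σ)) * P with hη₂def
    have hη₁ : 0 < η₁ := mul_pos hfac₁ hP
    have hη₂ : 0 < η₂ := mul_pos hfac₂ hP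
    set ε' : ℝ := min (η₁ / (α₁ + A₁₂ + 1)) (η₂ / (α₂ + A₂₁ + 1)) with hε'def
    have hd₁pos : 0 < α₁ + A₁₂ + 1 := by linarith
    have hd₂pos : 0 < α₂ + A₂₁ + 1 := by linarith
    have hε'pos : 0 < ε' := lt_min (by positivity) (by positivity)
    have hkey₁ : (α₁ + A₁₂) * ε' ≤ η₁ := by
      have h1 : ε' ≤ η₁ / (α₁ + A₁₂ + 1) := min_le_left _ _
      have h2 : 0 ≤ η₁ / (α₁ + A₁₂ + 1) := by positivity
      have h3 : (η₁ / (α₁ + A₁₂ + 1)) * (α₁ + A₁₂ + 1) = η₁ :=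
        div_mul_cancel₀ _ (ne_of_gt hd₁pos)
      nlinarith
    have hkey₂ : (α₂ + A₂₁) * ε' ≤ η₂ := by
      have h1 : ε' ≤ η₂ / (α₂ + A₂₁ + 1) := min_le_right _ _
      have h2 : 0 ≤ η₂ / (α₂ + A₂₁ + 1) := by positivity
      have h3 : (η₂ / (α₂ + A₂₁ + 1)) * (α₂ + A₂₁ + 1) = η₂ :=
        div_mul_cancel₀ _ (ne_of_gt hd₂pos)
      nlinarith
    -- continuity window
    obtain ⟨δa, hδa, hballa⟩ := Metric.continuousAt_iff.mp (hc₁.continuousAt (x := tt)) ε' hε'pos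
    obtain ⟨δb, hδb, hballb⟩ := Metric.continuousAt_iff.mp (hc₂.continuousAt (x := tt)) ε' hε'pos
    set δ₀ : ℝ := min δa δb / 2 with hδ₀def
    have hδ₀pos : 0 < δ₀ := by
      rw [hδ₀def]
      have : 0 < min δa δb := lt_min hδa hδb
      linarith
    have hδ₀a : δ₀ < δa := by
      rw [hδ₀def]
      have h1 : min δa δb ≤ δa := min_le_left _ _
      have h2 : 0 < min δa δb := lt_min hδa hδb
      linarith
    have hδ₀b : δ₀ < δb := by
      rw [hδ₀def]
      have h1 : min δa δb ≤ δb := min_le_right _ _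
      have h2 : 0 < min δa δb := lt_min hδa hδb
      linarith
    have hδ₀x₁ : ∀ s, |s - tt| ≤ δ₀ → |x₁ s - x₁ tt| ≤ ε' := by
      intro s hs
      have hd : dist s tt < δa := by rw [Real.dist_eq]; linarith
      have := hballa hd
      rw [Real.dist_eq] at this
      linarith
    have hδ₀x₂ : ∀ s, |s - tt| ≤ δ₀ → |x₂ s - x₂ tt| ≤ ε' := by
      intro s hs
      have hd : dist s tt < δb := by rw [Real.dist_eq]; linarith
      have := hballb hd
      rw [Real.dist_eq] at this
      linarith
    -- integral equations starting at tt
    have heqtt₁ : ∀ u, tt ≤ u →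
        x₁ u = x₁ tt + ∫ s in tt..u, (-(a₁ s) * x₁ s + a₁₂ s * x₂ (g₁₂ s)) := by
      intro u hu
      have hsub : Set.uIcc tt u ⊆ Set.uIcc t₀ u := by
        rw [Set.uIcc_of_le hu, Set.uIcc_of_le (htt0.trans hu)]
        exact Set.Icc_subset_Icc htt0 le_rfl
      have hadd := intervalIntegral.integral_add_adjacent_intervals
        (hI₁ tt htt0) ((hI₁ u (htt0.trans hu)).mono_set hsub)
      have e1 := hE₁ u (htt0.trans hu)
      have e2 := hE₁ tt htt0
      linarith
    have heqtt₂ : ∀ u, tt ≤ u →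
        x₂ u = x₂ tt + ∫ s in tt..u, (-(a₂ s) * x₂ s + a₂₁ s * x₁ (g₂₁ s)) := by
      intro u hu
      have hsub : Set.uIcc tt u ⊆ Set.uIcc t₀ u := by
        rw [Set.uIcc_of_le hu, Set.uIcc_of_le (htt0.trans hu)]
        exact Set.Icc_subset_Icc htt0 le_rfl
      have hadd := intervalIntegral.integral_add_adjacent_intervals
        (hI₂ tt htt0) ((hI₂ u (htt0.trans hu)).mono_set hsub)
      have e1 := hE₂ u (htt0.trans hu)
      have e2 := hE₂ tt htt0
      linarith
    have hinttt₁ : ∀ u, tt ≤ u →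
        IntervalIntegrable (fun s => -(a₁ s) * x₁ s + a₁₂ s * x₂ (g₁₂ s))
          MeasureTheory.volume tt u := by
      intro u hu
      apply (hI₁ u (htt0.trans hu)).mono_set
      rw [Set.uIcc_of_le hu, Set.uIcc_of_le (htt0.trans hu)]
      exact Set.Icc_subset_Icc htt0 le_rfl
    have hinttt₂ : ∀ u, tt ≤ u →
        IntervalIntegrable (fun s => -(a₂ s) * x₂ s + a₂₁ s * x₁ (g₂₁ s))
          MeasureTheory.volume tt u := by
      intro u hu
      apply (hI₂ u (htt0.trans hu)).mono_set
      rw [Set.uIcc_of_le hu, Set.uIcc_of_le (htt0.trans hu)]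
      exact Set.Icc_subset_Icc htt0 le_rfl
    -- history bounds
    have hist₂ : ∀ u, t₀ - σ ≤ u → u ≤ t₀ → |x₂ u| ≤ Kε := by
      intro u h1 h2
      have := hSle u h1 h2
      have h3 := norm_snd_le (x₁ u, x₂ u)
      simp only at h3
      rw [← Real.norm_eq_abs]
      rw [hKεdef]
      linarith
    have hist₁ : ∀ u, t₀ - σ ≤ u → u ≤ t₀ → |x₁ u| ≤ Kε := by
      intro u h1 h2
      have := hSle u h1 h2
      have h3 := norm_fst_le (x₁ u, x₂ u)
      simp only at h3
      rw [← Real.norm_eq_abs]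
      rw [hKεdef]
      linarith
    -- apply crossing lemma to both components
    obtain ⟨δ₁, hδ₁pos, hcr₁⟩ := crossAux x₁ x₂ a₁ a₁₂ g₁₂ α₁ A₁₂ lam w₁ w₂ σ t₀ Kε tt δ₀ ε'
      ht₀ htt0 hσ hα₁ hA12 hlam hw₁ hw₂ hKε
      (fun s hs => (ha₁_bd s hs).1) ha₁₂_bd hg₁₂ hist₂
      (fun u h1 h2 => (goodIcc u h1 h2).2) hgoodtt.1 hc₁ hinttt₁ heqtt₁ hε'pos
      (by rw [← hPdef, ← hη₁def]; exact hkey₁) hδ₀pos hδ₀x₁ hδ₀x₂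
    obtain ⟨δ₂, hδ₂pos, hcr₂⟩ := crossAux x₂ x₁ a₂ a₂₁ g₂₁ α₂ A₂₁ lam w₂ w₁ σ t₀ Kε tt δ₀ ε'
      ht₀ htt0 hσ hα₂ hA21 hlam hw₂ hw₁ hKε
      (fun s hs => (ha₂_bd s hs).1) ha₂₁_bd hg₂₁ hist₁
      (fun u h1 h2 => (goodIcc u h1 h2).1) hgoodtt.2 hc₂ hinttt₂ heqtt₂ hε'pos
      (by rw [← hPdef, ← hη₂def]; exact hkey₂) hδ₀pos hδ₀x₂ hδ₀x₁
    -- contradiction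
    have hlt : sInf B < tt + min δ₁ δ₂ := by
      rw [← httdef]
      have : 0 < min δ₁ δ₂ := lt_min hδ₁pos hδ₂pos
      linarith
    obtain ⟨b, hbB, hblt⟩ := exists_lt_of_csInf_lt hBne hlt
    have hbtt : tt ≤ b := by
      have := csInf_le hBbd hbB
      rw [← httdef] at this
      exact this
    have hb₁ : b ≤ tt + δ₁ := by
      have : min δ₁ δ₂ ≤ δ₁ := min_le_left _ _
      linarith
    have hb₂ : b ≤ tt + δ₂ := by
      have : min δ₁ δ₂ ≤ δ₂ := min_le_right _ _
      linarith
    exact hbB.2 ⟨hcr₁ b hbtt hb₁, hcr₂ b hbtt hb₂⟩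
  -- conclude
  have hnorm : ‖(x₁ t, x₂ t)‖ = max |x₁ t| |x₂ t| := by
    rw [Prod.norm_def, Real.norm_eq_abs, Real.norm_eq_abs]
  have hCpos : 0 < max w₁ w₂ * Real.exp (-lam * (t - t₀)) := by
    have : 0 < max w₁ w₂ := lt_of_lt_of_le hw₁0 (le_max_left _ _)
    positivity
  apply le_of_forall_pos_le_add
  intro η hη
  set C : ℝ := max w₁ w₂ * Real.exp (-lam * (t - t₀)) with hCdef
  have hεη : 0 < η / C := by positivity
  obtain ⟨hm₁, hm₂⟩ := main (η / C) hεη t ht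
  have hEeq : Real.exp (-(lam * (t - t₀))) = Real.exp (-lam * (t - t₀)) := by
    congr 1; ring
  rw [hEeq] at hm₁ hm₂
  have hexp0 : 0 < Real.exp (-lam * (t - t₀)) := Real.exp_pos _
  have hKη : 0 < K + η / C := by positivity
  have hb₁ : |x₁ t| ≤ C * (K + η / C) := by
    calc |x₁ t| ≤ w₁ * Real.exp (-lam * (t - t₀)) * (K + η / C) := hm₁
      _ ≤ max w₁ w₂ * Real.exp (-lam * (t - t₀)) * (K + η / C) := by
          apply mul_le_mul_of_nonneg_right (mul_le_mul_of_nonneg_right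
            (le_max_left _ _) hexp0.le) hKη.le
      _ = C * (K + η / C) := by rw [hCdef]
  have hb₂ : |x₂ t| ≤ C * (K + η / C) := by
    calc |x₂ t| ≤ w₂ * Real.exp (-lam * (t - t₀)) * (K + η / C) := hm₂
      _ ≤ max w₁ w₂ * Real.exp (-lam * (t - t₀)) * (K + η / C) := by
          apply mul_le_mul_of_nonneg_right (mul_le_mul_of_nonneg_right
            (le_max_right _ _) hexp0.le) hKη.le
      _ = C * (K + η / C) := by rw [hCdef]
  have hCKη : C * (K + η / C) = C * K + η := by
    have hCne : C ≠ 0 := ne_of_gt hCpos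
    field_simp
  rw [hnorm]
  rw [max_le_iff]
  constructor
  · calc |x₁ t| ≤ C * (K + η / C) := hb₁
      _ = C * K + η := hCKη
      _ = max w₁ w₂ * Real.exp (-lam * (t - t₀)) * K + η := by rw [hCdef]
  · calc |x₂ t| ≤ C * (K + η / C) := hb₂
      _ = C * K + η := hCKη
      _ = max w₁ w₂ * Real.exp (-lam * (t - t₀)) * K + η := by rw [hCdef]
end

section
/- Let F_ij : ℝ → ℝ, i,j = 1,…,m, satisfy |F_ij(u) − F_ij(v)| ≤ L_ij|u − v| for all u,v ∈ ℝ, where L_ij ≥ 0, and let L be the m×m matrix (L_ij). If the spectral radius r(L) of L is less than 1, then the system of equations u_i = Σ_{j=1}^m F_ij(u_j), i = 1,…,m, has a unique solution (u_1,…,u_m) ∈ ℝ^m. -/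
/-!
The map `T u = (∑ⱼ F i j (u j))ᵢ` is dominated by `L` componentwise, `|T u - T v| ≤ L |u - v|`,
and since `L` has nonnegative entries this iterates to `|Tⁿ u - Tⁿ v| ≤ Lⁿ |u - v|`. By Gelfand's
formula, `r(L) < 1` forces `‖Lⁿ‖ < 1` in the `∞`-operator norm for some `n`, so `Tⁿ` is a
contraction of `(ℝᵐ, ‖·‖∞)`, and a map with a contracting iterate has a unique fixed point.
-/

open Matrix Function
open scoped NNReal

attribute [local instance] Matrix.linftyOpNormedAddCommGroup Matrix.linftyOpNormedRing
  Matrix.linftyOpNormedAlgebra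

theorem spectrum.exists_nnnorm_pow_lt_one {A : Type*} [NormedRing A] [NormedAlgebra ℂ A]
    [CompleteSpace A] (a : A) (ha : ∀ z ∈ spectrum ℂ a, ‖z‖ < 1) :
    ∃ n : ℕ, ‖a ^ n‖₊ < 1 := by
  cases subsingleton_or_nontrivial A with
  | inl _ => exact ⟨0, by rw [Subsingleton.elim (a ^ 0) 0, nnnorm_zero]; exact one_pos⟩
  | inr _ =>
    have hrad : spectralRadius ℂ a < (1 : ℝ≥0) :=
      spectralRadius_lt_of_forall_lt a fun z hz => mod_cast ha z hz
    obtain ⟨n, hroot, hn⟩ :=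
      ((pow_nnnorm_pow_one_div_tendsto_nhds_spectralRadius a).eventually_lt_const hrad
        |>.and (Filter.eventually_gt_atTop 0)).exists
    exact ⟨n, not_le.1 fun h => hroot.not_ge (ENNReal.one_le_rpow (mod_cast h) (by positivity))⟩

theorem Matrix.linfty_opNNNorm_map_of_nnnorm_eq {m n α β : Type*} [Fintype m] [Fintype n]
    [NormedAddCommGroup α] [NormedAddCommGroup β] (A : Matrix m n α) {f : α → β}
    (hf : ∀ x, ‖f x‖₊ = ‖x‖₊) : ‖A.map f‖₊ = ‖A‖₊ := by
  simp [linfty_opNNNorm_def, hf]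

theorem ContractingWith.existsUnique_isFixedPt_of_iterate {α : Type*} [MetricSpace α]
    [Nonempty α] [CompleteSpace α] {K : ℝ≥0} {f : α → α} {n : ℕ}
    (hf : ContractingWith K f^[n]) : ∃! x, IsFixedPt f x :=
  ⟨_, hf.isFixedPt_fixedPoint_iterate, fun _ hx => hf.fixedPoint_unique (hx.iterate n)⟩

section

variable {ι : Type*} [Fintype ι]

theorem pi_norm_le_norm_of_abs_le {x y : ι → ℝ} (h : |x| ≤ y) : ‖x‖ ≤ ‖y‖ :=
  (pi_norm_le_iff_of_nonneg (norm_nonneg y)).2 fun i =>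
    (h i).trans ((le_abs_self _).trans (norm_le_pi_norm y i))

theorem pi_norm_abs (x : ι → ℝ) : ‖|x|‖ = ‖x‖ := by
  simp [Pi.norm_def]

theorem Matrix.mulVec_le_mulVec_of_nonneg {L : Matrix ι ι ℝ} (hL : ∀ i j, 0 ≤ L i j)
    {u v : ι → ℝ} (huv : u ≤ v) : L *ᵥ u ≤ L *ᵥ v := fun i =>
  dotProduct_le_dotProduct_of_nonneg_left huv (hL i)

theorem abs_sum_comp_sub_le_mulVec {L : Matrix ι ι ℝ} {F : ι → ι → ℝ → ℝ}
    (hLip : ∀ i j u v, |F i j u - F i j v| ≤ L i j * |u - v|) (u v : ι → ℝ) :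
    |(fun i => ∑ j, F i j (u j)) - fun i => ∑ j, F i j (v j)| ≤ L *ᵥ |u - v| := fun i =>
  calc |∑ j, F i j (u j) - ∑ j, F i j (v j)| = |∑ j, (F i j (u j) - F i j (v j))| := by
        rw [Finset.sum_sub_distrib]
    _ ≤ ∑ j, |F i j (u j) - F i j (v j)| := Finset.abs_sum_le_sum_abs _ _
    _ ≤ ∑ j, L i j * |u j - v j| := Finset.sum_le_sum fun j _ => hLip i j _ _
    _ = (L *ᵥ |u - v|) i := rfl

variable [DecidableEq ι] {L : Matrix ι ι ℝ} {T : (ι → ℝ) → ι → ℝ}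

theorem abs_iterate_sub_le_pow_mulVec (hL : ∀ i j, 0 ≤ L i j)
    (hT : ∀ u v, |T u - T v| ≤ L *ᵥ |u - v|) (k : ℕ) (u v : ι → ℝ) :
    |T^[k] u - T^[k] v| ≤ (L ^ k) *ᵥ |u - v| := by
  induction k with
  | zero => simp
  | succ k ih =>
    calc |T^[k + 1] u - T^[k + 1] v|
        = |T (T^[k] u) - T (T^[k] v)| := by rw [iterate_succ_apply', iterate_succ_apply']
      _ ≤ L *ᵥ |T^[k] u - T^[k] v| := hT _ _
      _ ≤ L *ᵥ ((L ^ k) *ᵥ |u - v|) := mulVec_le_mulVec_of_nonneg hL ih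
      _ = (L ^ (k + 1)) *ᵥ |u - v| := by rw [mulVec_mulVec, pow_succ']

theorem lipschitzWith_of_abs_sub_le_mulVec (hT : ∀ u v, |T u - T v| ≤ L *ᵥ |u - v|) :
    LipschitzWith ‖L‖₊ T := by
  refine LipschitzWith.of_dist_le_mul fun u v => ?_
  calc dist (T u) (T v) ≤ ‖L *ᵥ |u - v|‖ := by
        rw [dist_eq_norm]; exact pi_norm_le_norm_of_abs_le (hT u v)
    _ ≤ ‖L‖ * ‖|u - v|‖ := linfty_opNorm_mulVec _ _
    _ = ‖L‖₊ * dist u v := by rw [pi_norm_abs, dist_eq_norm, coe_nnnorm]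

end

/-- Lemma 3.1: if `|F_ij(u) − F_ij(v)| ≤ L_ij|u − v|` and the spectral radius of the
matrix `L = (L_ij)` is less than 1 (i.e., every complex eigenvalue of `L` has modulus
less than 1), then the system `u_i = Σ_j F_ij(u_j)` has a unique solution. -/
theorem stmt11
    (m : ℕ)
    (F : Fin m → Fin m → ℝ → ℝ) (L : Matrix (Fin m) (Fin m) ℝ)
    (hL_nonneg : ∀ i j, 0 ≤ L i j)
    (hLip : ∀ i j u v, |F i j u - F i j v| ≤ L i j * |u - v|)
    (hr : ∀ μ : ℂ, μ ∈ spectrum ℂ (L.map (Complex.ofReal)) → ‖μ‖ < 1) :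
    ∃! u : Fin m → ℝ, ∀ i, u i = ∑ j, F i j (u j) := by
  obtain ⟨n, hn⟩ := spectrum.exists_nnnorm_pow_lt_one (Complex.ofRealHom.mapMatrix L) hr
  rw [← map_pow Complex.ofRealHom.mapMatrix, RingHom.mapMatrix_apply,
    linfty_opNNNorm_map_of_nnnorm_eq _ (f := Complex.ofRealHom) Complex.nnnorm_real] at hn
  have hcontr : ContractingWith ‖L ^ n‖₊ (fun u i => ∑ j, F i j (u j))^[n] :=
    ⟨hn, lipschitzWith_of_abs_sub_le_mulVec
      (abs_iterate_sub_le_pow_mulVec hL_nonneg (abs_sum_comp_sub_le_mulVec hLip) n)⟩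
  simpa [IsFixedPt, funext_iff, eq_comm] using hcontr.existsUnique_isFixedPt_of_iterate
end

section
/- Consider the system of equations a_i x_i = Σ_{j=1}^n a_ij f_j(y_j) + I_i, b_i y_i = Σ_{j=1}^n b_ij g_j(x_j) + J_i, i = 1,…,n, where a_i > 0, b_i > 0, I_i, J_i, a_ij, b_ij ∈ ℝ, and f_j, g_j : ℝ → ℝ satisfy |f_j(u) − f_j(v)| ≤ L_j^f|u − v| and |g_j(u) − g_j(v)| ≤ L_j^g|u − v|. Define the 2n×2n matrices A and B in block form: A has zero diagonal blocks, upper-right block with (i,j) entry |a_ij|L_j^f/a_i and lower-left block with (i,j) entry |b_ij|L_j^g/b_i; B has zero diagonal blocks, upper-right block with (i,j) entry |a_ij|L_j^f/b_j and lower-left block with (i,j) entry |b_ij|L_j^g/a_j. Suppose at least one of the following conditions holds: (1) max|λ(A)| < 1 over all eigenvalues of A; (2) max_i Σ_{j=1}^n |a_ij|L_j^f/a_i < 1 and max_i Σ_{j=1}^n |b_ij|L_j^g/b_i < 1; (3) max_j Σ_{i=1}^n |a_ij|L_j^f/a_i < 1 and max_j Σ_{i=1}^n |b_ij|L_j^g/b_i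 < 1; (4) Σ_{i=1}^n Σ_{j=1}^n [(|a_ij|L_j^f/a_i)² + (|b_ij|L_j^g/b_i)²] < 1; (5) max|λ(B)| < 1 over all eigenvalues of B; (6) max_i Σ_{j=1}^n |a_ij|L_j^f/b_j < 1 and max_i Σ_{j=1}^n |b_ij|L_j^g/a_j < 1; (7) max_j Σ_{i=1}^n |a_ij|L_j^f/b_j < 1 and max_j Σ_{i=1}^n |b_ij|L_j^g/a_j < 1; (8) Σ_{i=1}^n Σ_{j=1}^n [(|a_ij|L_j^f/b_j)² + (|b_ij|L_j^g/a_j)²] < 1. Then the system has a unique solution (x_1,…,x_n,y_1,…,y_n) ∈ ℝ^{2n}. -/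
/-!
The equilibria are the fixed points of the map
`T (x, y) = (D_a⁻¹ (aᵢⱼ f(y) + I), D_b⁻¹ (bᵢⱼ g(x) + J))` on `ℝⁿ × ℝⁿ`, and the Lipschitz bounds
give `|T z - T w| ≤ A |z - w|` entrywise. Since `A ≥ 0`, this iterates to
`|Tᵏ z - Tᵏ w| ≤ Aᵏ |z - w|`; if the spectral radius of `A` is `< 1`, Gelfand's formula yields
`‖Aᵏ‖_∞ < 1` for some `k`, so `Tᵏ` is a contraction of the sup norm and `T` has a unique fixed
point. Each of the eight conditions bounds the spectral radius of `A`: conditions (2)-(4) bound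
a submultiplicative norm of `A` (row sums, row sums of `Aᵀ`, Frobenius norm), and `B = D A D⁻¹`
with `D = diag(a, b)`, so (5)-(8) are the same conditions for a matrix similar to `A`.
-/

open Matrix Filter

section SpectralRadius

variable {𝕜 A : Type*} [NormedField 𝕜] [NormedRing A] [NormedAlgebra 𝕜 A] [CompleteSpace A]

-- Unlike `spectrum.spectralRadius_le_nnnorm`, this does not need `‖1‖ = 1`, so that it
-- applies to the Frobenius norm.
theorem spectralRadius_le_nnnorm' (a : A) : spectralRadius 𝕜 a ≤ ‖a‖₊ := by
  refine (spectrum.spectralRadius_le_liminf_pow_nnnorm_pow_one_div 𝕜 a).trans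
    (liminf_le_of_frequently_le' ((eventually_gt_atTop 0).frequently.mono fun k hk => ?_))
  calc (‖a ^ k‖₊ : ENNReal) ^ (1 / k : ℝ) ≤ ((‖a‖₊ : ENNReal) ^ k) ^ (1 / k : ℝ) := by
        gcongr
        exact_mod_cast nnnorm_pow_le' a hk
    _ = ‖a‖₊ := by rw [one_div, ENNReal.pow_rpow_inv_natCast hk.ne']

theorem norm_le_norm_of_mem_spectrum {a : A} {μ : 𝕜} (hμ : μ ∈ spectrum 𝕜 a) : ‖μ‖ ≤ ‖a‖ := by
  have : (‖μ‖₊ : ENNReal) ≤ ‖a‖₊ :=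
    (le_iSup₂ (α := ENNReal) μ hμ).trans (spectralRadius_le_nnnorm' a)
  exact_mod_cast this

end SpectralRadius

section Gelfand

variable {A : Type*} [NormedRing A] [NormedAlgebra ℂ A] [CompleteSpace A] {a : A}

theorem spectralRadius_lt_one_of_forall_norm_lt_one (h : ∀ μ ∈ spectrum ℂ a, ‖μ‖ < 1) :
    spectralRadius ℂ a < 1 := by
  rcases (spectrum ℂ a).eq_empty_or_nonempty with he | hne
  · simp [spectralRadius, he]
  · exact_mod_cast spectrum.spectralRadius_lt_of_forall_lt_of_nonempty hne (r := 1)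
      fun μ hμ => by exact_mod_cast h μ hμ

theorem exists_pow_nnnorm_lt_one (h : spectralRadius ℂ a < 1) : ∃ k, ‖a ^ k‖₊ < 1 := by
  obtain ⟨k, hk, hk0⟩ :=
    ((spectrum.pow_nnnorm_pow_one_div_tendsto_nhds_spectralRadius a).eventually_lt_const h
      |>.and (eventually_gt_atTop 0)).exists
  rw [one_div, ENNReal.rpow_inv_lt_iff (by positivity), ENNReal.one_rpow] at hk
  exact ⟨k, by exact_mod_cast hk⟩

end Gelfand

namespace Matrix

theorem mulVec_mono_of_nonneg {m n : Type*} [Fintype n] {M : Matrix m n ℝ}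
    (hM : ∀ i j, 0 ≤ M i j) {v w : n → ℝ} (h : v ≤ w) : M *ᵥ v ≤ M *ᵥ w :=
  fun i => dotProduct_le_dotProduct_of_nonneg_left h (hM i)

theorem fromBlocks_zero_apply_nonneg {m n : Type*} {P : Matrix m n ℝ} {Q : Matrix n m ℝ}
    (hP : ∀ i j, 0 ≤ P i j) (hQ : ∀ i j, 0 ≤ Q i j) : ∀ s t, 0 ≤ fromBlocks 0 P Q 0 s t := by
  rintro (i | i) (j | j) <;> simp [hP, hQ]

variable {N : Type*} [Fintype N] [DecidableEq N]

theorem spectrum_transpose {R : Type*} [CommRing R] (M : Matrix N N R) :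
    spectrum R Mᵀ = spectrum R M := by
  ext μ
  simp only [spectrum.mem_iff, isUnit_iff_isUnit_det, algebraMap_eq_diagonal]
  rw [← det_transpose, transpose_sub, diagonal_transpose, transpose_transpose]

theorem spectrum_diagonal_mul_mul_diagonal_inv {𝕜 : Type*} [Field 𝕜] (d : N → 𝕜)
    (hd : ∀ i, d i ≠ 0) (M : Matrix N N 𝕜) :
    spectrum 𝕜 (diagonal d * M * diagonal d⁻¹) = spectrum 𝕜 M := by
  exact spectrum.units_conjugate (u := ⟨diagonal d, diagonal d⁻¹, by simp [hd], by simp [hd]⟩)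

section Linfty

attribute [local instance] Matrix.linftyOpNormedRing Matrix.linftyOpNormedAlgebra

theorem norm_lt_one_of_mem_spectrum_of_sum_row_lt_one {𝕜 : Type*} [RCLike 𝕜] {M : Matrix N N 𝕜}
    (h : ∀ i, ∑ j, ‖M i j‖ < 1) : ∀ μ ∈ spectrum 𝕜 M, ‖μ‖ < 1 := by
  have hM : ‖M‖₊ < 1 := by
    rw [linfty_opNNNorm_def, Finset.sup_lt_iff zero_lt_one]
    exact fun i _ => by simpa [← NNReal.coe_lt_coe] using h i
  exact fun μ hμ => (norm_le_norm_of_mem_spectrum hμ).trans_lt (by exact_mod_cast hM)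

theorem norm_lt_one_of_mem_spectrum_of_sum_col_lt_one {𝕜 : Type*} [RCLike 𝕜] {M : Matrix N N 𝕜}
    (h : ∀ j, ∑ i, ‖M i j‖ < 1) : ∀ μ ∈ spectrum 𝕜 M, ‖μ‖ < 1 := by
  rw [← spectrum_transpose]
  exact norm_lt_one_of_mem_spectrum_of_sum_row_lt_one h

theorem linfty_opNNNorm_map_ofReal (M : Matrix N N ℝ) : ‖M.map Complex.ofReal‖₊ = ‖M‖₊ := by
  simp [linfty_opNNNorm_def]

variable {T : (N → ℝ) → N → ℝ} {M : Matrix N N ℝ}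

theorem abs_iterate_sub_le_pow_mulVec (hM : ∀ i j, 0 ≤ M i j)
    (hT : ∀ z w, |T z - T w| ≤ M *ᵥ |z - w|) (k : ℕ) (z w : N → ℝ) :
    |T^[k] z - T^[k] w| ≤ (M ^ k) *ᵥ |z - w| := by
  induction k generalizing z w with
  | zero => simp
  | succ k ih =>
    calc |T^[k + 1] z - T^[k + 1] w| ≤ (M ^ k) *ᵥ |T z - T w| := ih (T z) (T w)
      _ ≤ (M ^ k) *ᵥ (M *ᵥ |z - w|) := mulVec_mono_of_nonneg (pow_apply_nonneg hM k) (hT z w)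
      _ = (M ^ (k + 1)) *ᵥ |z - w| := by rw [mulVec_mulVec, pow_succ]

theorem lipschitzWith_iterate_of_abs_sub_le_mulVec (hM : ∀ i j, 0 ≤ M i j)
    (hT : ∀ z w, |T z - T w| ≤ M *ᵥ |z - w|) (k : ℕ) : LipschitzWith ‖M ^ k‖₊ T^[k] := by
  refine LipschitzWith.of_dist_le_mul fun z w => ?_
  rw [dist_eq_norm, dist_eq_norm]
  refine (pi_norm_le_iff_of_nonneg (by positivity)).2 fun s => ?_
  calc ‖(T^[k] z - T^[k] w) s‖ ≤ ‖(M ^ k) *ᵥ |z - w|‖ :=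
        (abs_iterate_sub_le_pow_mulVec hM hT k z w s).trans
          ((Real.le_norm_self _).trans (norm_le_pi_norm _ s))
    _ ≤ ‖M ^ k‖ * ‖|z - w|‖ := linfty_opNorm_mulVec _ _
    _ = ‖M ^ k‖ * ‖z - w‖ := by simp [Pi.norm_def]

theorem existsUnique_fixedPoint_of_abs_sub_le_mulVec (hM : ∀ i j, 0 ≤ M i j)
    (hT : ∀ z w, |T z - T w| ≤ M *ᵥ |z - w|)
    (hspec : ∀ μ ∈ spectrum ℂ (M.map Complex.ofReal), ‖μ‖ < 1) : ∃! z, T z = z := by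
  obtain ⟨k, hk⟩ := exists_pow_nnnorm_lt_one (spectralRadius_lt_one_of_forall_norm_lt_one hspec)
  have hpow : (M ^ k).map Complex.ofReal = M.map Complex.ofReal ^ k :=
    map_pow Complex.ofRealHom.mapMatrix M k
  have hC : ContractingWith ‖M ^ k‖₊ T^[k] :=
    ⟨by rwa [← linfty_opNNNorm_map_ofReal, hpow],
      lipschitzWith_iterate_of_abs_sub_le_mulVec hM hT k⟩
  exact ⟨hC.fixedPoint, hC.isFixedPt_fixedPoint_iterate,
    fun z hz => hC.fixedPoint_unique (Function.IsFixedPt.iterate hz k)⟩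

end Linfty

section Frobenius

attribute [local instance] frobeniusNormedRing frobeniusNormedAlgebra

theorem norm_lt_one_of_mem_spectrum_of_sum_sq_lt_one {𝕜 : Type*} [RCLike 𝕜] {M : Matrix N N 𝕜}
    (h : ∑ i, ∑ j, ‖M i j‖ ^ 2 < 1) : ∀ μ ∈ spectrum 𝕜 M, ‖μ‖ < 1 := by
  have hM : ‖M‖ < 1 := by
    rw [frobenius_norm_def]
    simp only [Real.rpow_two]
    exact Real.rpow_lt_one (by positivity) h (by norm_num)
  exact fun μ hμ => (norm_le_norm_of_mem_spectrum hμ).trans_lt hM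

end Frobenius

section Blocks

variable {m n : Type*} [Fintype m] [Fintype n] [DecidableEq m] [DecidableEq n]
  {P : Matrix m n ℝ} {Q : Matrix n m ℝ}

theorem norm_lt_one_of_mem_spectrum_fromBlocks_of_sum_row_lt_one (hP : ∀ i j, 0 ≤ P i j)
    (hQ : ∀ i j, 0 ≤ Q i j) (h₁ : ∀ i, ∑ j, P i j < 1) (h₂ : ∀ i, ∑ j, Q i j < 1) :
    ∀ μ ∈ spectrum ℂ ((fromBlocks 0 P Q 0).map Complex.ofReal), ‖μ‖ < 1 := by
  refine norm_lt_one_of_mem_spectrum_of_sum_row_lt_one ?_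
  rintro (i | i) <;> simp [Fintype.sum_sum_type, abs_of_nonneg, hP, hQ, h₁, h₂]

theorem norm_lt_one_of_mem_spectrum_fromBlocks_of_sum_col_lt_one (hP : ∀ i j, 0 ≤ P i j)
    (hQ : ∀ i j, 0 ≤ Q i j) (h₁ : ∀ j, ∑ i, P i j < 1) (h₂ : ∀ j, ∑ i, Q i j < 1) :
    ∀ μ ∈ spectrum ℂ ((fromBlocks 0 P Q 0).map Complex.ofReal), ‖μ‖ < 1 := by
  refine norm_lt_one_of_mem_spectrum_of_sum_col_lt_one ?_
  rintro (j | j) <;> simp [Fintype.sum_sum_type, abs_of_nonneg, hP, hQ, h₁, h₂]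

theorem norm_lt_one_of_mem_spectrum_fromBlocks_of_sum_sq_lt_one
    (h : ∑ i, ∑ j, P i j ^ 2 + ∑ i, ∑ j, Q i j ^ 2 < 1) :
    ∀ μ ∈ spectrum ℂ ((fromBlocks 0 P Q 0).map Complex.ofReal), ‖μ‖ < 1 := by
  refine norm_lt_one_of_mem_spectrum_of_sum_sq_lt_one ?_
  simpa [Fintype.sum_sum_type, add_comm] using h

theorem spectrum_map_fromBlocks_div_row_eq_div_col {a : m → ℝ} {b : n → ℝ} (ha : ∀ i, a i ≠ 0)
    (hb : ∀ i, b i ≠ 0) (P : m → n → ℝ) (Q : n → m → ℝ) :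
    spectrum ℂ ((fromBlocks 0 (of fun i j => P i j / a i) (of fun i j => Q i j / b i) 0).map
        Complex.ofReal) =
      spectrum ℂ ((fromBlocks 0 (of fun i j => P i j / b j) (of fun i j => Q i j / a j) 0).map
        Complex.ofReal) := by
  rw [← spectrum_diagonal_mul_mul_diagonal_inv (fun s => ((Sum.elim a b s : ℝ) : ℂ))
    (by rintro (i | i) <;> simp [ha, hb])]
  congr 1
  ext (i | i) (j | j) <;>
    simp [diagonal_mul, mul_diagonal, mul_div_cancel₀, ← div_eq_mul_inv, ha, hb]

end Blocks

end Matrix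

theorem abs_sum_mul_add_div_sub_le {ι : Type*} [Fintype ι] {a : ℝ} (ha : 0 < a) (c L : ι → ℝ)
    {f : ι → ℝ → ℝ} (hf : ∀ j u v, |f j u - f j v| ≤ L j * |u - v|) (I : ℝ) (u v : ι → ℝ) :
    |(∑ j, c j * f j (u j) + I) / a - (∑ j, c j * f j (v j) + I) / a| ≤
      ∑ j, |c j| * L j / a * |u j - v j| :=
  calc |(∑ j, c j * f j (u j) + I) / a - (∑ j, c j * f j (v j) + I) / a|
      = |∑ j, c j * (f j (u j) - f j (v j))| / a := by
        rw [← sub_div, add_sub_add_right_eq_sub, ← Finset.sum_sub_distrib, abs_div, abs_of_pos ha]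
        simp only [mul_sub]
    _ ≤ (∑ j, |c j| * (L j * |u j - v j|)) / a := by
        gcongr
        refine (Finset.abs_sum_le_sum_abs _ _).trans (Finset.sum_le_sum fun j _ => ?_)
        rw [abs_mul]
        gcongr
        exact hf j _ _
    _ = ∑ j, |c j| * L j / a * |u j - v j| := by
        rw [Finset.sum_div]
        exact Finset.sum_congr rfl fun j _ => by ring

section BAM

variable {ι : Type*} [Fintype ι] (a b : ι → ℝ) (aij bij : ι → ι → ℝ) (I J : ι → ℝ)
  (f g : ι → ℝ → ℝ)

noncomputable def bamMap (z : ι ⊕ ι → ℝ) : ι ⊕ ι → ℝ :=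
  Sum.elim (fun i => (∑ j, aij i j * f j (z (.inr j)) + I i) / a i)
    (fun i => (∑ j, bij i j * g j (z (.inl j)) + J i) / b i)

variable {a b aij bij I J f g}

theorem bamMap_eq_self_iff (ha : ∀ i, a i ≠ 0) (hb : ∀ i, b i ≠ 0) (z : ι ⊕ ι → ℝ) :
    bamMap a b aij bij I J f g z = z ↔
      (∀ i, a i * z (.inl i) = ∑ j, aij i j * f j (z (.inr j)) + I i) ∧
      (∀ i, b i * z (.inr i) = ∑ j, bij i j * g j (z (.inl j)) + J i) := by
  simp only [funext_iff, Sum.forall, bamMap, Sum.elim_inl, Sum.elim_inr]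
  refine Iff.and (forall_congr' fun i => ?_) (forall_congr' fun i => ?_)
  · rw [div_eq_iff (ha i), eq_comm, mul_comm]
  · rw [div_eq_iff (hb i), eq_comm, mul_comm]

theorem abs_bamMap_sub_le {Lf Lg : ι → ℝ} (ha : ∀ i, 0 < a i) (hb : ∀ i, 0 < b i)
    (hf : ∀ j u v, |f j u - f j v| ≤ Lf j * |u - v|)
    (hg : ∀ j u v, |g j u - g j v| ≤ Lg j * |u - v|)
    (z w : ι ⊕ ι → ℝ) :
    |bamMap a b aij bij I J f g z - bamMap a b aij bij I J f g w| ≤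
      fromBlocks 0 (of fun i j => |aij i j| * Lf j / a i) (of fun i j => |bij i j| * Lg j / b i) 0
        *ᵥ |z - w| := by
  rintro (i | i)
  · simpa [bamMap, fromBlocks_mulVec, mulVec, dotProduct] using
      abs_sum_mul_add_div_sub_le (ha i) (aij i) Lf hf (I i) (z ∘ .inr) (w ∘ .inr)
  · simpa [bamMap, fromBlocks_mulVec, mulVec, dotProduct] using
      abs_sum_mul_add_div_sub_le (hb i) (bij i) Lg hg (J i) (z ∘ .inl) (w ∘ .inl)

end BAM

/-- Theorem 3.4: under any of the eight conditions on the matrices `A` and `B` built from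
the parameters, the equilibrium system `a_i x_i = Σ_j a_ij f_j(y_j) + I_i`,
`b_i y_i = Σ_j b_ij g_j(x_j) + J_i` has a unique solution. -/
theorem stmt13
    (n : ℕ)
    (a b : Fin n → ℝ) (aij bij : Fin n → Fin n → ℝ)
    (I J : Fin n → ℝ)
    (f g : Fin n → ℝ → ℝ) (Lf Lg : Fin n → ℝ)
    (ha : ∀ i, 0 < a i) (hb : ∀ i, 0 < b i)
    (hLf_nonneg : ∀ j, 0 ≤ Lf j) (hLg_nonneg : ∀ j, 0 ≤ Lg j)
    (hf : ∀ j u v, |f j u - f j v| ≤ Lf j * |u - v|)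
    (hg : ∀ j u v, |g j u - g j v| ≤ Lg j * |u - v|)
    -- the block matrices A and B
    (A B : Matrix (Fin n ⊕ Fin n) (Fin n ⊕ Fin n) ℝ)
    (hA : A = Matrix.fromBlocks 0 (Matrix.of fun i j => |aij i j| * Lf j / a i)
      (Matrix.of fun i j => |bij i j| * Lg j / b i) 0)
    (hB : B = Matrix.fromBlocks 0 (Matrix.of fun i j => |aij i j| * Lf j / b j)
      (Matrix.of fun i j => |bij i j| * Lg j / a j) 0)
    -- at least one of the eight conditions
    (hcond :
      (∀ μ : ℂ, μ ∈ spectrum ℂ (A.map (Complex.ofReal)) → ‖μ‖ < 1) ∨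
      ((∀ i, ∑ j, |aij i j| * Lf j / a i < 1) ∧ (∀ i, ∑ j, |bij i j| * Lg j / b i < 1)) ∨
      ((∀ j, ∑ i, |aij i j| * Lf j / a i < 1) ∧ (∀ j, ∑ i, |bij i j| * Lg j / b i < 1)) ∨
      (∑ i, ∑ j, ((|aij i j| * Lf j / a i) ^ 2 + (|bij i j| * Lg j / b i) ^ 2) < 1) ∨
      (∀ μ : ℂ, μ ∈ spectrum ℂ (B.map (Complex.ofReal)) → ‖μ‖ < 1) ∨
      ((∀ i, ∑ j, |aij i j| * Lf j / b j < 1) ∧ (∀ i, ∑ j, |bij i j| * Lg j / a j < 1)) ∨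
      ((∀ j, ∑ i, |aij i j| * Lf j / b j < 1) ∧ (∀ j, ∑ i, |bij i j| * Lg j / a j < 1)) ∨
      (∑ i, ∑ j, ((|aij i j| * Lf j / b j) ^ 2 + (|bij i j| * Lg j / a j) ^ 2) < 1)) :
    ∃! p : (Fin n → ℝ) × (Fin n → ℝ),
      (∀ i, a i * p.1 i = ∑ j, aij i j * f j (p.2 j) + I i) ∧
      (∀ i, b i * p.2 i = ∑ j, bij i j * g j (p.1 j) + J i) := by
  subst hA hB
  have hPa (i j) : 0 ≤ |aij i j| * Lf j / a i := by have := hLf_nonneg j; have := ha i; positivity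
  have hQb (i j) : 0 ≤ |bij i j| * Lg j / b i := by have := hLg_nonneg j; have := hb i; positivity
  have hPb (i j) : 0 ≤ |aij i j| * Lf j / b j := by have := hLf_nonneg j; have := hb j; positivity
  have hQa (i j) : 0 ≤ |bij i j| * Lg j / a j := by have := hLg_nonneg j; have := ha j; positivity
  have hAB := spectrum_map_fromBlocks_div_row_eq_div_col (fun i => (ha i).ne') (fun i => (hb i).ne')
    (fun i j => |aij i j| * Lf j) (fun i j => |bij i j| * Lg j)
  have hspec : ∀ μ ∈ spectrum ℂ ((fromBlocks 0 (of fun i j => |aij i j| * Lf j / a i)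
      (of fun i j => |bij i j| * Lg j / b i) 0).map Complex.ofReal), ‖μ‖ < 1 := by
    rcases hcond with h | ⟨h₁, h₂⟩ | ⟨h₁, h₂⟩ | h | h | ⟨h₁, h₂⟩ | ⟨h₁, h₂⟩ | h
    · exact h
    · exact norm_lt_one_of_mem_spectrum_fromBlocks_of_sum_row_lt_one hPa hQb h₁ h₂
    · exact norm_lt_one_of_mem_spectrum_fromBlocks_of_sum_col_lt_one hPa hQb h₁ h₂
    · exact norm_lt_one_of_mem_spectrum_fromBlocks_of_sum_sq_lt_one
        (by simpa only [Finset.sum_add_distrib, of_apply] using h)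
    · rwa [hAB]
    · rw [hAB]; exact norm_lt_one_of_mem_spectrum_fromBlocks_of_sum_row_lt_one hPb hQa h₁ h₂
    · rw [hAB]; exact norm_lt_one_of_mem_spectrum_fromBlocks_of_sum_col_lt_one hPb hQa h₁ h₂
    · rw [hAB]
      exact norm_lt_one_of_mem_spectrum_fromBlocks_of_sum_sq_lt_one
        (by simpa only [Finset.sum_add_distrib, of_apply] using h)
  rw [← (Equiv.sumArrowEquivProdArrow _ _ _).existsUnique_congr
    (bamMap_eq_self_iff (fun i => (ha i).ne') (fun i => (hb i).ne'))]
  exact existsUnique_fixedPoint_of_abs_sub_le_mulVec (fromBlocks_zero_apply_nonneg hPa hQb)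
    (abs_bamMap_sub_le ha hb hf hg) hspec
end

section
/- Consider the autonomous two-dimensional system ẋ(t) = −a_1 x(t − τ_1) + a_12 f_1(y(t − σ_1)), ẏ(t) = −a_2 y(t − τ_2) + a_21 f_2(x(t − σ_2)), where a_i > 0, a_12, a_21 > 0, τ_i ≥ 0, σ_i ≥ 0, and |f_i(u)| ≤ L_i|u| with f_i continuous, i = 1,2. If a_1τ_1 < 1, a_2τ_2 < 1, and (1 − a_1τ_1)(1 − a_2τ_2)/((1 + a_1τ_1)(1 + a_2τ_2)) > a_12 a_21 L_1 L_2/(a_1 a_2), then the system is globally exponentially stable. -/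
/-!
Choose weights `p, q > 0` with `a₁₂L₁(1 + a₁τ₁) q < a₁(1 - a₁τ₁) p` and
`a₂₁L₂(1 + a₂τ₂) p < a₂(1 - a₂τ₂) q`; such a ratio `p / q` exists exactly under the hypothesis.
The weighted norm `W(t) = max(|x t| / p, |y t| / q)` then satisfies `W(t) ≤ D e^{-κ(t - t₀)}`
for small `κ > 0`. Otherwise, at the first time `T` where one component, say `|x| / p`, touches
the bound, the derivative of `|x|` at `T` is at least that of the bound. Writing
`x(T - τ₁) = x(T) - ∫_{T-τ₁}^T ẋ` turns the delayed damping term into `-a₁|x(T)|` plus an integral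
of size `τ₁ · O(bound)`, and the resulting inequality fails for small `κ`.
This needs `T > t₀ + τ₁`, so the first delay window is covered by a crude growth bound
`‖(x, y)(t)‖ ≤ K e^{c(t - t₀)}`, itself proved by the same first-touch argument.
-/

open MeasureTheory Set Filter Topology Real intervalIntegral

theorem HasDerivAt.le_of_le_left_of_eq {u φ : ℝ → ℝ} {du dφ a T : ℝ} (hu : HasDerivAt u du T)
    (hφ : HasDerivAt φ dφ T) (haT : a < T) (hle : ∀ s ∈ Ioo a T, u s ≤ φ s)
    (heq : u T = φ T) : dφ ≤ du := by
  rw [← sub_nonpos]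
  refine le_of_tendsto ((hasDerivAt_iff_tendsto_slope.mp (hφ.sub hu)).mono_left
    (nhdsLT_le_nhdsNE T)) ?_
  filter_upwards [Ioo_mem_nhdsLT haT] with s hs
  rw [slope_def_field, Pi.sub_apply, Pi.sub_apply, heq, sub_self, sub_zero]
  exact div_nonpos_of_nonneg_of_nonpos (sub_nonneg.2 (hle s hs)) (by linarith [hs.2])

theorem HasDerivAt.exists_sign_le_of_abs_le_left_of_eq {x φ : ℝ → ℝ} {dx dφ a T : ℝ}
    (hx : HasDerivAt x dx T) (hφ : HasDerivAt φ dφ T) (haT : a < T)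
    (hle : ∀ s ∈ Ioo a T, |x s| ≤ φ s) (heq : |x T| = φ T) :
    ∃ ς : ℝ, |ς| = 1 ∧ ς * x T = |x T| ∧ dφ ≤ ς * dx := by
  rcases le_total 0 (x T) with h | h
  · refine ⟨1, abs_one, by rw [one_mul, abs_of_nonneg h], ?_⟩
    rw [one_mul]
    exact hx.le_of_le_left_of_eq hφ haT (fun s hs => (le_abs_self _).trans (hle s hs))
      (by rw [← heq, abs_of_nonneg h])
  · refine ⟨-1, by simp, by rw [neg_one_mul, abs_of_nonpos h], ?_⟩
    rw [neg_one_mul]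
    exact hx.neg.le_of_le_left_of_eq hφ haT (fun s hs => (neg_le_abs _).trans (hle s hs))
      (by rw [← heq, abs_of_nonpos h]; rfl)

theorem exists_first_zero {h : ℝ → ℝ} (hc : Continuous h) {a b : ℝ} (hab : a ≤ b)
    (ha : 0 < h a) (hb : h b ≤ 0) : ∃ T ∈ Ioc a b, h T = 0 ∧ ∀ s ∈ Ico a T, 0 < h s := by
  set S := Icc a b ∩ {s | h s ≤ 0}
  have hS : IsCompact S := isCompact_Icc.inter_right (isClosed_le hc continuous_const)
  have hTS : sInf S ∈ S := hS.sInf_mem ⟨b, ⟨hab, le_rfl⟩, hb⟩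
  have hfirst : ∀ s ∈ Icc a b, s < sInf S → 0 < h s := fun s hs hsT =>
    not_le.1 fun hs' => (csInf_le hS.bddBelow ⟨hs, hs'⟩).not_gt hsT
  have haT : a < sInf S := lt_of_le_of_ne hTS.1.1 fun haT => (haT ▸ ha).not_ge hTS.2
  obtain ⟨s, hs, hs0⟩ := intermediate_value_Icc' haT.le hc.continuousOn ⟨hTS.2, ha.le⟩
  have hsT : s = sInf S :=
    le_antisymm hs.2 (csInf_le hS.bddBelow ⟨⟨hs.1, hs.2.trans hTS.1.2⟩, hs0.le⟩)
  exact ⟨sInf S, ⟨haT, hTS.1.2⟩, hsT ▸ hs0,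
    fun s hs => hfirst s ⟨hs.1, hs.2.le.trans hTS.1.2⟩ hs.2⟩

theorem le_mul_exp_of_no_first_touch {g : ℝ → ℝ} (hg : Continuous g) {t₀ B β : ℝ}
    (h₀ : g t₀ ≤ B)
    (H : ∀ B' > B, ∀ T > t₀, (∀ s ∈ Icc t₀ T, g s ≤ B' * exp (β * (s - t₀))) →
      g T = B' * exp (β * (T - t₀)) → False)
    {t : ℝ} (ht : t₀ ≤ t) : g t ≤ B * exp (β * (t - t₀)) := by
  have hlim : Tendsto (fun B' => B' * exp (β * (t - t₀))) (𝓝[>] B)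
      (𝓝 (B * exp (β * (t - t₀)))) :=
    ((continuous_mul_const _).tendsto B).mono_left nhdsWithin_le_nhds
  refine ge_of_tendsto hlim (eventually_nhdsWithin_of_forall fun B' (hB' : B < B') => ?_)
  by_contra! hgt
  obtain ⟨T, hT, hT0, hpos⟩ := exists_first_zero
    (h := fun s => B' * exp (β * (s - t₀)) - g s) (by fun_prop) ht
    (by simp only [sub_self, mul_zero, exp_zero, mul_one]; linarith) (by linarith)
  refine H B' hB' T hT.1 (fun s hs => ?_) (by linarith)
  rcases hs.2.lt_or_eq with hsT | rfl
  · linarith [hpos s ⟨hs.1, hsT⟩]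
  · linarith

theorem exp_neg_mul_sub_le {κ s T d t₀ : ℝ} (hκ : 0 ≤ κ) (hs : T - d ≤ s) :
    exp (-κ * (s - t₀)) ≤ exp (-κ * (T - t₀)) * exp (κ * d) := by
  rw [← exp_add]
  exact exp_le_exp.2 (by nlinarith)

theorem max_div_le_max_inv_mul_max {p q : ℝ} (hp : 0 < p) (u v : ℝ) :
    max (|u| / p) (|v| / q) ≤ max p⁻¹ q⁻¹ * max |u| |v| := by
  have : 0 ≤ max p⁻¹ q⁻¹ := le_max_of_le_left (inv_nonneg.2 hp.le)
  rw [div_eq_inv_mul, div_eq_inv_mul]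
  exact max_le (by gcongr <;> apply le_max_left) (by gcongr <;> apply le_max_right)

theorem max_le_max_mul_max_div {p q : ℝ} (hp : 0 < p) (hq : 0 < q) (u v : ℝ) :
    max |u| |v| ≤ max p q * max (|u| / p) (|v| / q) := by
  have : 0 ≤ max (|u| / p) (|v| / q) := le_max_of_le_left (by positivity)
  refine max_le ?_ ?_
  · calc |u| = p * (|u| / p) := by field_simp
      _ ≤ _ := by gcongr <;> apply le_max_left
  · calc |v| = q * (|v| / q) := by field_simp
      _ ≤ _ := by gcongr <;> apply le_max_right

/-- The data of one equation `u̇(t) = -a u(t - τ) + A f(v(t - σ))` of the system. -/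
structure DelayTerm where
  a : ℝ
  A : ℝ
  τ : ℝ
  σ : ℝ
  L : ℝ
  f : ℝ → ℝ
  a_nonneg : 0 ≤ a
  A_nonneg : 0 ≤ A
  τ_nonneg : 0 ≤ τ
  σ_nonneg : 0 ≤ σ
  continuous_f : Continuous f
  abs_f_le : ∀ u, |f u| ≤ L * |u|

namespace DelayTerm

variable (C : DelayTerm)

def field (x y : ℝ → ℝ) (s : ℝ) : ℝ :=
  -C.a * x (s - C.τ) + C.A * C.f (y (s - C.σ))

theorem L_nonneg : 0 ≤ C.L := by
  simpa using (abs_nonneg _).trans (C.abs_f_le 1)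

theorem continuous_field {x y : ℝ → ℝ} (hx : Continuous x) (hy : Continuous y) :
    Continuous (C.field x y) := by
  have := C.continuous_f
  unfold field
  fun_prop

theorem abs_field_le (x y : ℝ → ℝ) (s : ℝ) :
    |C.field x y s| ≤ C.a * |x (s - C.τ)| + C.A * (C.L * |y (s - C.σ)|) :=
  calc |C.field x y s| ≤ |-C.a * x (s - C.τ)| + |C.A * C.f (y (s - C.σ))| := abs_add_le _ _
    _ = C.a * |x (s - C.τ)| + C.A * |C.f (y (s - C.σ))| := by
      rw [abs_mul, abs_mul, abs_neg, abs_of_nonneg C.a_nonneg, abs_of_nonneg C.A_nonneg]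
    _ ≤ C.a * |x (s - C.τ)| + C.A * (C.L * |y (s - C.σ)|) := by
      gcongr
      · exact C.A_nonneg
      · exact C.abs_f_le _

theorem sign_mul_field_le {ς : ℝ} (hς : |ς| = 1) (x y : ℝ → ℝ) (s : ℝ) :
    ς * C.field x y s ≤ -C.a * (ς * x (s - C.τ)) + C.A * (C.L * |y (s - C.σ)|) := by
  have hf : ς * C.f (y (s - C.σ)) ≤ C.L * |y (s - C.σ)| :=
    (le_abs_self _).trans (by rw [abs_mul, hς, one_mul]; exact C.abs_f_le _)
  calc ς * C.field x y s = -C.a * (ς * x (s - C.τ)) + C.A * (ς * C.f (y (s - C.σ))) := by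
        rw [field]; ring
    _ ≤ -C.a * (ς * x (s - C.τ)) + C.A * (C.L * |y (s - C.σ)|) := by
        gcongr; exact C.A_nonneg

theorem abs_integral_field_le {x y : ℝ → ℝ} {t t' X Y : ℝ} (htt' : t ≤ t')
    (hx : ∀ s ∈ Icc t t', |x (s - C.τ)| ≤ X) (hy : ∀ s ∈ Icc t t', |y (s - C.σ)| ≤ Y) :
    |∫ s in t..t', C.field x y s| ≤ (t' - t) * (C.a * X + C.A * (C.L * Y)) := by
  have := C.a_nonneg
  have := C.A_nonneg
  have := C.L_nonneg
  have hbd := norm_integral_le_of_norm_le_const (a := t) (b := t') (f := C.field x y)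
    (C := C.a * X + C.A * (C.L * Y)) fun s hs => by
      rw [uIoc_of_le htt'] at hs
      have hs' : s ∈ Icc t t' := Ioc_subset_Icc_self hs
      calc ‖C.field x y s‖ ≤ C.a * |x (s - C.τ)| + C.A * (C.L * |y (s - C.σ)|) :=
            C.abs_field_le x y s
        _ ≤ C.a * X + C.A * (C.L * Y) := by gcongr <;> simp_all
  rwa [abs_of_nonneg (sub_nonneg.2 htt'), mul_comm] at hbd

/-- At a first touch of `|x| / p` with `B e^{-κ (t - t₀)}`, the derivative inequality divided by
the touching value reads `0 ≤ C.decayDefect p q κ`. -/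
noncomputable def decayDefect (p q κ : ℝ) : ℝ :=
  (κ - C.a) * p
    + C.a * C.τ * (C.a * p * exp (κ * (2 * C.τ)) + C.A * C.L * q * exp (κ * (C.τ + C.σ)))
    + C.A * C.L * q * exp (κ * C.σ)

theorem decayDefect_zero (p q : ℝ) :
    C.decayDefect p q 0 = q * (C.A * C.L * (1 + C.a * C.τ)) - p * (C.a * (1 - C.a * C.τ)) := by
  simp only [decayDefect, zero_mul, exp_zero]
  ring

theorem continuous_decayDefect (p q : ℝ) : Continuous (C.decayDefect p q) := by
  unfold decayDefect
  fun_prop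

theorem exists_decay_rate (C₁ C₂ : DelayTerm) (ha₁ : 0 < C₁.a) (ha₂ : 0 < C₂.a)
    (hsmall₁ : C₁.a * C₁.τ < 1) (hsmall₂ : C₂.a * C₂.τ < 1)
    (h : C₁.A * C₂.A * C₁.L * C₂.L * ((1 + C₁.a * C₁.τ) * (1 + C₂.a * C₂.τ)) <
      (1 - C₁.a * C₁.τ) * (1 - C₂.a * C₂.τ) * (C₁.a * C₂.a)) :
    ∃ p q κ : ℝ, 0 < p ∧ 0 < q ∧ 0 < κ ∧
      C₁.decayDefect p q κ < 0 ∧ C₂.decayDefect q p κ < 0 := by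
  set α := C₁.A * C₁.L * (1 + C₁.a * C₁.τ)
  set β := C₁.a * (1 - C₁.a * C₁.τ)
  set γ := C₂.A * C₂.L * (1 + C₂.a * C₂.τ)
  set δ := C₂.a * (1 - C₂.a * C₂.τ)
  have hα : 0 ≤ α := mul_nonneg (mul_nonneg C₁.A_nonneg C₁.L_nonneg)
    (by linarith [mul_nonneg C₁.a_nonneg C₁.τ_nonneg])
  have hγ : 0 ≤ γ := mul_nonneg (mul_nonneg C₂.A_nonneg C₂.L_nonneg)
    (by linarith [mul_nonneg C₂.a_nonneg C₂.τ_nonneg])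
  have hβ : 0 < β := mul_pos ha₁ (by linarith)
  have hδ : 0 < δ := mul_pos ha₂ (by linarith)
  have hαγ : α * γ < β * δ := by linarith
  have h₁ : C₁.decayDefect (α + δ) (β + γ) 0 < 0 := by rw [C₁.decayDefect_zero]; nlinarith
  have h₂ : C₂.decayDefect (β + γ) (α + δ) 0 < 0 := by rw [C₂.decayDefect_zero]; nlinarith
  have hev : ∀ᶠ κ in 𝓝[>] 0, C₁.decayDefect (α + δ) (β + γ) κ < 0 ∧
      C₂.decayDefect (β + γ) (α + δ) κ < 0 := nhdsWithin_le_nhds <|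
    ((C₁.continuous_decayDefect _ _).tendsto 0).eventually (gt_mem_nhds h₁) |>.and
      (((C₂.continuous_decayDefect _ _).tendsto 0).eventually (gt_mem_nhds h₂))
  obtain ⟨κ, ⟨hκ₁, hκ₂⟩, hκ⟩ := (hev.and self_mem_nhdsWithin).exists
  exact ⟨α + δ, β + γ, κ, by positivity, by positivity, hκ, hκ₁, hκ₂⟩

end DelayTerm

def SolvesDelayEq (C : DelayTerm) (t₀ : ℝ) (x y : ℝ → ℝ) : Prop :=
  ∀ t, t₀ ≤ t → x t = x t₀ + ∫ s in t₀..t, C.field x y s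

namespace SolvesDelayEq

variable {C : DelayTerm} {t₀ T : ℝ} {x y : ℝ → ℝ}

theorem hasDerivAt (h : SolvesDelayEq C t₀ x y) (hx : Continuous x) (hy : Continuous y)
    (hT : t₀ < T) : HasDerivAt x (C.field x y T) T := by
  have hF := C.continuous_field hx hy
  have := (integral_hasDerivAt_right (hF.intervalIntegrable t₀ T)
    (hF.stronglyMeasurableAtFilter _ _) hF.continuousAt).const_add (x t₀)
  exact this.congr_of_eventuallyEq
    (eventually_of_mem (Ioi_mem_nhds hT) fun s hs => h s (le_of_lt hs))

theorem sub_eq_integral (h : SolvesDelayEq C t₀ x y) (hx : Continuous x) (hy : Continuous y)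
    {t t' : ℝ} (ht : t₀ ≤ t) (htt' : t ≤ t') : x t' - x t = ∫ s in t..t', C.field x y s := by
  have hF := C.continuous_field hx hy
  rw [h t' (ht.trans htt'), h t ht, add_sub_add_left_eq_sub,
    integral_interval_sub_left (hF.intervalIntegrable _ _) (hF.intervalIntegrable _ _)]

theorem exists_sign_touch (h : SolvesDelayEq C t₀ x y) (hx : Continuous x) (hy : Continuous y)
    {B β : ℝ} (hT : t₀ < T) (hle : ∀ s ∈ Icc t₀ T, |x s| ≤ B * exp (β * (s - t₀)))
    (heq : |x T| = B * exp (β * (T - t₀))) :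
    ∃ ς : ℝ, |ς| = 1 ∧ ς * x T = |x T| ∧ β * |x T| ≤ ς * C.field x y T := by
  have hφ : HasDerivAt (fun s => B * exp (β * (s - t₀))) (β * |x T|) T := by
    refine ((((hasDerivAt_id T).sub_const t₀).const_mul β).exp.const_mul B).congr_deriv ?_
    rw [heq, id, mul_one]; ring
  exact (h.hasDerivAt hx hy hT).exists_sign_le_of_abs_le_left_of_eq hφ hT
    (fun s hs => hle s (Ioo_subset_Icc_self hs)) heq

theorem le_add_mul_of_touch (h : SolvesDelayEq C t₀ x y) (hx : Continuous x) (hy : Continuous y)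
    {B c : ℝ} (hB : 0 < B) (hT : t₀ < T) (hle : ∀ s ∈ Icc t₀ T, |x s| ≤ B * exp (c * (s - t₀)))
    (heq : |x T| = B * exp (c * (T - t₀)))
    (hxτ : |x (T - C.τ)| ≤ |x T|) (hyσ : |y (T - C.σ)| ≤ |x T|) : c ≤ C.a + C.A * C.L := by
  obtain ⟨ς, hς, -, hder⟩ := h.exists_sign_touch hx hy hT hle heq
  have hxT : 0 < |x T| := heq ▸ by positivity
  have := C.A_nonneg
  have := C.L_nonneg
  refine le_of_mul_le_mul_right ?_ hxT
  calc c * |x T| ≤ ς * C.field x y T := hder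
    _ ≤ |C.field x y T| := (le_abs_self _).trans_eq (by rw [abs_mul, hς, one_mul])
    _ ≤ C.a * |x (T - C.τ)| + C.A * (C.L * |y (T - C.σ)|) := C.abs_field_le x y T
    _ ≤ C.a * |x T| + C.A * (C.L * |x T|) := by gcongr; exact C.a_nonneg
    _ = (C.a + C.A * C.L) * |x T| := by ring

theorem mul_abs_le_of_touch (h : SolvesDelayEq C t₀ x y) (hx : Continuous x)
    (hy : Continuous y) {B β : ℝ} (hT : t₀ + C.τ < T)
    (hle : ∀ s ∈ Icc t₀ T, |x s| ≤ B * exp (β * (s - t₀)))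
    (heq : |x T| = B * exp (β * (T - t₀))) :
    β * |x T| ≤ -C.a * |x T| + C.a * |∫ s in (T - C.τ)..T, C.field x y s|
      + C.A * (C.L * |y (T - C.σ)|) := by
  have hτ := C.τ_nonneg
  obtain ⟨ς, hς, hςx, hder⟩ := h.exists_sign_touch hx hy (by linarith) hle heq
  set I := ∫ s in (T - C.τ)..T, C.field x y s
  have hxτ : x (T - C.τ) = x T - I := by
    linarith [h.sub_eq_integral hx hy (t := T - C.τ) (t' := T) (by linarith) (by linarith)]
  calc β * |x T| ≤ ς * C.field x y T := hder
    _ ≤ -C.a * (ς * x (T - C.τ)) + C.A * (C.L * |y (T - C.σ)|) := C.sign_mul_field_le hς x y T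
    _ = -C.a * |x T| + C.a * (ς * I) + C.A * (C.L * |y (T - C.σ)|) := by
      rw [hxτ, mul_sub, hςx]; ring
    _ ≤ _ := by
      gcongr
      · exact C.a_nonneg
      · exact (le_abs_self _).trans_eq (by rw [abs_mul, hς, one_mul])

theorem decayDefect_nonneg_of_touch (h : SolvesDelayEq C t₀ x y) (hx : Continuous x)
    (hy : Continuous y) {p q κ B : ℝ} (hp : 0 < p) (hq : 0 < q) (hκ : 0 ≤ κ) (hB : 0 < B)
    (hT : t₀ + C.τ < T)
    (hle : ∀ s ∈ Icc (t₀ - max C.τ C.σ) T,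
      max (|x s| / p) (|y s| / q) ≤ B * exp (-κ * (s - t₀)))
    (heq : |x T| / p = B * exp (-κ * (T - t₀))) : 0 ≤ C.decayDefect p q κ := by
  have hτ := C.τ_nonneg
  have hσ := C.σ_nonneg
  have hτm := le_max_left C.τ C.σ
  have hσm := le_max_right C.τ C.σ
  set R := B * exp (-κ * (T - t₀))
  have hR : 0 < R := by positivity
  have hxT : |x T| = p * R := by rw [← heq]; field_simp
  have hbd : ∀ s ∈ Icc (t₀ - max C.τ C.σ) T,
      |x s| ≤ p * (B * exp (-κ * (s - t₀))) ∧ |y s| ≤ q * (B * exp (-κ * (s - t₀))) := by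
    intro s hs
    simpa only [max_le_iff, div_le_iff₀' hp, div_le_iff₀' hq] using hle s hs
  have hlag : ∀ d s, t₀ - max C.τ C.σ ≤ T - d → T - d ≤ s → s ≤ T →
      |x s| ≤ p * (R * exp (κ * d)) ∧ |y s| ≤ q * (R * exp (κ * d)) := by
    intro d s hd hs hsT
    have hexp : B * exp (-κ * (s - t₀)) ≤ R * exp (κ * d) := by
      rw [mul_assoc]; gcongr; exact exp_neg_mul_sub_le hκ hs
    obtain ⟨hxs, hys⟩ := hbd s ⟨hd.trans hs, hsT⟩
    exact ⟨hxs.trans (by gcongr), hys.trans (by gcongr)⟩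
  have htouch := h.mul_abs_le_of_touch (B := p * B) (β := -κ) hx hy hT
    (fun s hs => (mul_assoc p B _).symm ▸ (hbd s ⟨by linarith [hs.1], hs.2⟩).1)
    (by rw [hxT, mul_assoc])
  have hI := C.abs_integral_field_le (x := x) (y := y) (t := T - C.τ) (t' := T) (by linarith)
    (fun s hs => (hlag (2 * C.τ) _ (by linarith) (by linarith [hs.1]) (by linarith [hs.2])).1)
    (fun s hs => (hlag (C.τ + C.σ) _ (by linarith) (by linarith [hs.1])
      (by linarith [hs.2])).2)
  have hyσ := (hlag C.σ (T - C.σ) (by linarith) le_rfl (by linarith)).2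
  rw [show T - (T - C.τ) = C.τ by ring] at hI
  have := C.a_nonneg
  have := C.A_nonneg
  have := C.L_nonneg
  have : 0 ≤ R * C.decayDefect p q κ := by
    unfold DelayTerm.decayDefect
    nlinarith [mul_le_mul_of_nonneg_left hI C.a_nonneg,
      mul_le_mul_of_nonneg_left hyσ (mul_nonneg C.A_nonneg C.L_nonneg)]
  exact nonneg_of_mul_nonneg_right this hR

end SolvesDelayEq

theorem max_abs_le_growth {C₁ C₂ : DelayTerm} {t₀ r K c : ℝ} {x y : ℝ → ℝ}
    (hx : SolvesDelayEq C₁ t₀ x y) (hy : SolvesDelayEq C₂ t₀ y x) (hxc : Continuous x)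
    (hyc : Continuous y) (hr₁ : max C₁.τ C₁.σ ≤ r) (hr₂ : max C₂.τ C₂.σ ≤ r)
    (hc₁ : C₁.a + C₁.A * C₁.L < c) (hc₂ : C₂.a + C₂.A * C₂.L < c)
    (hK : ∀ s ∈ Icc (t₀ - r) t₀, max |x s| |y s| ≤ K) {t : ℝ} (ht : t₀ ≤ t) :
    max |x t| |y t| ≤ K * exp (c * (t - t₀)) := by
  have hr : 0 ≤ r := (le_max_of_le_left C₁.τ_nonneg).trans hr₁
  have hc : 0 ≤ c := by linarith [C₁.a_nonneg, mul_nonneg C₁.A_nonneg C₁.L_nonneg]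
  have hK₀ := hK t₀ ⟨by linarith, le_rfl⟩
  refine le_mul_exp_of_no_first_touch (g := fun s => max |x s| |y s|) (by fun_prop) hK₀
    (fun B hB T hT hle heq => ?_) ht
  beta_reduce at hle heq
  have hB₀ : 0 < B := by linarith [abs_nonneg (x t₀), le_max_left |x t₀| |y t₀|]
  have hpast : ∀ s ∈ Icc (t₀ - r) T, max |x s| |y s| ≤ max |x T| |y T| := by
    intro s hs
    rw [heq]
    rcases le_total t₀ s with hs₀ | hs₀
    · exact (hle s ⟨hs₀, hs.2⟩).trans (by gcongr; exact hs.2)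
    · calc max |x s| |y s| ≤ K := hK s ⟨hs.1, hs₀⟩
        _ ≤ B * 1 := by linarith
        _ ≤ B * exp (c * (T - t₀)) := by gcongr; exact one_le_exp (by nlinarith)
  have hlag : ∀ d, 0 ≤ d → d ≤ r → max |x (T - d)| |y (T - d)| ≤ max |x T| |y T| :=
    fun d hd hdr => hpast _ ⟨by linarith, by linarith⟩
  rcases max_choice |x T| |y T| with hmax | hmax <;> rw [hmax] at heq hlag
  · refine hc₁.not_ge (hx.le_add_mul_of_touch hxc hyc hB₀ hT
      (fun s hs => (le_max_left _ _).trans (hle s hs)) heq ?_ ?_)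
    · exact (le_max_left _ _).trans (hlag _ C₁.τ_nonneg ((le_max_left _ _).trans hr₁))
    · exact (le_max_right _ _).trans (hlag _ C₁.σ_nonneg ((le_max_right _ _).trans hr₁))
  · refine hc₂.not_ge (hy.le_add_mul_of_touch hyc hxc hB₀ hT
      (fun s hs => (le_max_right _ _).trans (hle s hs)) heq ?_ ?_)
    · exact (le_max_right _ _).trans (hlag _ C₂.τ_nonneg ((le_max_left _ _).trans hr₂))
    · exact (le_max_left _ _).trans (hlag _ C₂.σ_nonneg ((le_max_right _ _).trans hr₂))
theorem max_div_le_decay {C₁ C₂ : DelayTerm} {t₀ r S D p q κ : ℝ} {x y : ℝ → ℝ}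
    (hx : SolvesDelayEq C₁ t₀ x y) (hy : SolvesDelayEq C₂ t₀ y x) (hxc : Continuous x)
    (hyc : Continuous y) (hr₁ : max C₁.τ C₁.σ ≤ r) (hr₂ : max C₂.τ C₂.σ ≤ r)
    (hS₁ : C₁.τ ≤ S) (hS₂ : C₂.τ ≤ S) (hp : 0 < p) (hq : 0 < q) (hκ : 0 ≤ κ)
    (h₁ : C₁.decayDefect p q κ < 0) (h₂ : C₂.decayDefect q p κ < 0)
    (hinit : ∀ s ∈ Icc (t₀ - r) (t₀ + S),
      max (|x s| / p) (|y s| / q) ≤ D * exp (-κ * (s - t₀)))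
    {t : ℝ} (ht : t₀ ≤ t) : max (|x t| / p) (|y t| / q) ≤ D * exp (-κ * (t - t₀)) := by
  have hr : 0 ≤ r := (le_max_of_le_left C₁.τ_nonneg).trans hr₁
  have hS : 0 ≤ S := C₁.τ_nonneg.trans hS₁
  have hD₀ := hinit t₀ ⟨by linarith, by linarith⟩
  rw [sub_self, mul_zero, exp_zero, mul_one] at hD₀
  refine le_mul_exp_of_no_first_touch (g := fun s => max (|x s| / p) (|y s| / q))
    (by fun_prop) hD₀ (fun B hB T hT hle heq => ?_) ht
  beta_reduce at hle heq
  have hB₀ : 0 < B := by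
    linarith [le_max_left (|x t₀| / p) (|y t₀| / q), div_nonneg (abs_nonneg (x t₀)) hp.le]
  have hDB : ∀ s, D * exp (-κ * (s - t₀)) < B * exp (-κ * (s - t₀)) := fun s => by gcongr
  have hTS : t₀ + S < T := by
    by_contra! hTS
    exact (hDB T).not_ge (heq ▸ hinit T ⟨by linarith, hTS⟩)
  have hpast : ∀ s ∈ Icc (t₀ - r) T,
      max (|x s| / p) (|y s| / q) ≤ B * exp (-κ * (s - t₀)) := by
    intro s hs
    rcases le_total t₀ s with hs₀ | hs₀
    · exact hle s ⟨hs₀, hs.2⟩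
    · exact (hinit s ⟨hs.1, by linarith⟩).trans (hDB s).le
  rcases max_choice (|x T| / p) (|y T| / q) with hmax | hmax <;> rw [hmax] at heq
  · exact h₁.not_ge (hx.decayDefect_nonneg_of_touch hxc hyc hp hq hκ hB₀ (by linarith)
      (fun s hs => hpast s ⟨by linarith [hs.1], hs.2⟩) heq)
  · exact h₂.not_ge (hy.decayDefect_nonneg_of_touch hyc hxc hq hp hκ hB₀ (by linarith)
      (fun s hs => max_comm (|x s| / p) _ ▸ hpast s ⟨by linarith [hs.1], hs.2⟩) heq)

theorem max_abs_le_decay {C₁ C₂ : DelayTerm} {t₀ r S K c p q κ : ℝ} {x y : ℝ → ℝ}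
    (hx : SolvesDelayEq C₁ t₀ x y) (hy : SolvesDelayEq C₂ t₀ y x) (hxc : Continuous x)
    (hyc : Continuous y) (hr₁ : max C₁.τ C₁.σ ≤ r) (hr₂ : max C₂.τ C₂.σ ≤ r)
    (hS₁ : C₁.τ ≤ S) (hS₂ : C₂.τ ≤ S) (hp : 0 < p) (hq : 0 < q) (hκ : 0 ≤ κ) (hc : 0 ≤ c)
    (h₁ : C₁.decayDefect p q κ < 0) (h₂ : C₂.decayDefect q p κ < 0)
    (hK : ∀ s ∈ Icc (t₀ - r) t₀, max |x s| |y s| ≤ K)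
    (hgrowth : ∀ s, t₀ ≤ s → max |x s| |y s| ≤ K * exp (c * (s - t₀))) {t : ℝ} (ht : t₀ ≤ t) :
    max |x t| |y t| ≤ max p q * max p⁻¹ q⁻¹ * exp ((c + κ) * S) * K * exp (-κ * (t - t₀)) := by
  have hr : 0 ≤ r := (le_max_of_le_left C₁.τ_nonneg).trans hr₁
  have hK₀ : 0 ≤ K := (le_max_of_le_left (abs_nonneg _)).trans (hK t₀ ⟨by linarith, le_rfl⟩)
  have hwindow : ∀ s ∈ Icc (t₀ - r) (t₀ + S),
      max |x s| |y s| ≤ exp ((c + κ) * S) * K * exp (-κ * (s - t₀)) := by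
    intro s hs
    rw [mul_comm _ K, mul_assoc, ← exp_add]
    rcases le_total t₀ s with hs₀ | hs₀
    · exact (hgrowth s hs₀).trans (by gcongr; nlinarith [hs.2])
    · exact (hK s ⟨hs.1, hs₀⟩).trans
        (le_mul_of_one_le_right hK₀ (one_le_exp (by nlinarith [hS₁, C₁.τ_nonneg])))
  have hdecay := max_div_le_decay hx hy hxc hyc hr₁ hr₂ hS₁ hS₂ hp hq hκ h₁ h₂
    (D := max p⁻¹ q⁻¹ * (exp ((c + κ) * S) * K)) (fun s hs => by
      rw [mul_assoc]
      exact (max_div_le_max_inv_mul_max hp _ _).trans (by gcongr; exact hwindow s hs)) ht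
  calc max |x t| |y t| ≤ max p q * max (|x t| / p) (|y t| / q) :=
        max_le_max_mul_max_div hp hq _ _
    _ ≤ max p q * (max p⁻¹ q⁻¹ * (exp ((c + κ) * S) * K) * exp (-κ * (t - t₀))) := by gcongr
    _ = _ := by ring

/-- The improvement of Gopalsamy's test: the autonomous system
`ẋ(t) = −a₁x(t−τ₁) + a₁₂f₁(y(t−σ₁))`, `ẏ(t) = −a₂y(t−τ₂) + a₂₁f₂(x(t−σ₂))`
is globally exponentially stable provided `a₁τ₁ < 1`, `a₂τ₂ < 1` and
`(1−a₁τ₁)(1−a₂τ₂)/((1+a₁τ₁)(1+a₂τ₂)) > a₁₂a₂₁L₁L₂/(a₁a₂)`. -/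
theorem stmt18
    (a₁ a₂ a₁₂ a₂₁ τ₁ τ₂ σ₁ σ₂ L₁ L₂ : ℝ)
    (f₁ f₂ : ℝ → ℝ)
    (ha₁ : 0 < a₁) (ha₂ : 0 < a₂) (ha₁₂ : 0 < a₁₂) (ha₂₁ : 0 < a₂₁)
    (hτ₁ : 0 ≤ τ₁) (hτ₂ : 0 ≤ τ₂) (hσ₁ : 0 ≤ σ₁) (hσ₂ : 0 ≤ σ₂)
    (hf₁_cont : Continuous f₁) (hf₂_cont : Continuous f₂)
    (hf₁ : ∀ u, |f₁ u| ≤ L₁ * |u|) (hf₂ : ∀ u, |f₂ u| ≤ L₂ * |u|)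
    (hsmall₁ : a₁ * τ₁ < 1) (hsmall₂ : a₂ * τ₂ < 1)
    (hcond : (1 - a₁ * τ₁) * (1 - a₂ * τ₂) / ((1 + a₁ * τ₁) * (1 + a₂ * τ₂)) >
      a₁₂ * a₂₁ * L₁ * L₂ / (a₁ * a₂)) :
    -- global exponential stability
    ∃ M Λ : ℝ, 0 < M ∧ 0 < Λ ∧
      ∀ t₀ : ℝ, 0 ≤ t₀ → ∀ x y : ℝ → ℝ,
        Continuous x → Continuous y →
        (∀ t, t₀ ≤ t → IntervalIntegrable
            (fun s => -a₁ * x (s - τ₁) + a₁₂ * f₁ (y (s - σ₁))) volume t₀ t) →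
        (∀ t, t₀ ≤ t → IntervalIntegrable
            (fun s => -a₂ * y (s - τ₂) + a₂₁ * f₂ (x (s - σ₂))) volume t₀ t) →
        (∀ t, t₀ ≤ t →
          x t = x t₀ + ∫ s in t₀..t, (-a₁ * x (s - τ₁) + a₁₂ * f₁ (y (s - σ₁)))) →
        (∀ t, t₀ ≤ t →
          y t = y t₀ + ∫ s in t₀..t, (-a₂ * y (s - τ₂) + a₂₁ * f₂ (x (s - σ₂)))) →
        ∀ t, t₀ ≤ t →
          ‖(x t, y t)‖ ≤
            M * Real.exp (-Λ * (t - t₀)) *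
              (‖(x t₀, y t₀)‖ +
                sSup ((fun s => ‖(x s, y s)‖) ''
                  Set.Icc (t₀ - max (max τ₁ τ₂) (max σ₁ σ₂)) t₀)) := by
  let C₁ : DelayTerm := ⟨a₁, a₁₂, τ₁, σ₁, L₁, f₁, ha₁.le, ha₁₂.le, hτ₁, hσ₁, hf₁_cont, hf₁⟩
  let C₂ : DelayTerm := ⟨a₂, a₂₁, τ₂, σ₂, L₂, f₂, ha₂.le, ha₂₁.le, hτ₂, hσ₂, hf₂_cont, hf₂⟩
  obtain ⟨p, q, κ, hp, hq, hκ, h₁, h₂⟩ := C₁.exists_decay_rate C₂ ha₁ ha₂ hsmall₁ hsmall₂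
    ((div_lt_div_iff₀ (by positivity) (by positivity)).1 hcond)
  set c := C₁.a + C₁.A * C₁.L + (C₂.a + C₂.A * C₂.L) + 1
  have hAL₁ := mul_nonneg C₁.A_nonneg C₁.L_nonneg
  have hAL₂ := mul_nonneg C₂.A_nonneg C₂.L_nonneg
  set r := max (max τ₁ τ₂) (max σ₁ σ₂)
  have hr₁ : max τ₁ σ₁ ≤ r := max_le_max (le_max_left _ _) (le_max_left _ _)
  have hr₂ : max τ₂ σ₂ ≤ r := max_le_max (le_max_right _ _) (le_max_right _ _)
  refine ⟨max p q * max p⁻¹ q⁻¹ * exp ((c + κ) * max τ₁ τ₂), κ, by positivity, hκ, ?_⟩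
  intro t₀ _ x y hxc hyc _ _ hx hy t ht
  set K := sSup ((fun s => ‖(x s, y s)‖) '' Icc (t₀ - r) t₀)
  have hK : ∀ s ∈ Icc (t₀ - r) t₀, ‖(x s, y s)‖ ≤ K :=
    fun s hs => le_csSup (isCompact_Icc.image (by fun_prop)).bddAbove ⟨s, hs, rfl⟩
  have hgrowth := fun s (hs : t₀ ≤ s) => max_abs_le_growth (C₁ := C₁) (C₂ := C₂) (c := c)
    hx hy hxc hyc hr₁ hr₂ (by linarith) (by linarith) hK hs
  have hdecay := max_abs_le_decay (C₁ := C₁) (C₂ := C₂) hx hy hxc hyc hr₁ hr₂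
    (le_max_left _ _) (le_max_right _ _) hp hq hκ.le
    (by linarith [C₁.a_nonneg, C₂.a_nonneg]) h₁ h₂ hK hgrowth ht
  calc ‖(x t, y t)‖ ≤ _ := hdecay
    _ = max p q * max p⁻¹ q⁻¹ * exp ((c + κ) * max τ₁ τ₂) * exp (-κ * (t - t₀)) * K := by ring
    _ ≤ _ := by gcongr; exact le_add_of_nonneg_left (norm_nonneg _)
end
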